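/- arXiv:2303.12476 — 7 statements merged into one kernel-verified Lean document; each statement's English description precedes it below -/
import Mathlib

section
/- Let β ∈ ℝ and let κ : Ω → Ω be defined by κ(x)_k = x_{-k-1}. If m is an e^{-βχ}-conformal Borel probability measure on Ω, then m ∘ κ (the pushforward of m under κ) is an e^{-(-β)χ}-conformal probability measure, and the map m ↦ m ∘ κ is a bijection from the set of e^{-βχ}-conformal probability measures onto the set of e^{-(-β)χ}-conformal probability measures. Moreover, m is ergodic if and only if m ∘ κ is ergodic. -/
/-!
STATEMENT 1. Let β ∈ ℝ and κ : Ω → Ω, κ(x)_k = x_{-k-1}. If m is an e^{-βχ}-conformal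
Borel probability measure on Ω then the pushforward m ∘ κ is an e^{-(-β)χ}-conformal
probability measure, the map m ↦ m ∘ κ is a bijection from the set of e^{-βχ}-conformal
probability measures onto the set of e^{-(-β)χ}-conformal probability measures, and
m is ergodic iff m ∘ κ is ergodic.
-/

open MeasureTheory Real

namespace Stmt1

abbrev Omega : Type := ℤ → Bool

/-- The Bernoulli shift: τ(x)_k = x_{k-1}. -/
def shift (x : Omega) : Omega := fun k => x (k - 1)

/-- The potential χ. -/
noncomputable def chi (θ : ℝ) (x : Omega) : ℝ := if x (-1) = false then 1 else -θ

/-- m is e^{-βχ}-conformal. -/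
def IsConformal (β θ : ℝ) (m : Measure Omega) : Prop :=
  ∀ B : Set Omega, MeasurableSet B →
    m (shift '' B) = ∫⁻ x in B, ENNReal.ofReal (Real.exp (-β * chi θ x)) ∂m

/-- m is ergodic for the shift. -/
def ErgodicShift (m : Measure Omega) : Prop :=
  ∀ B : Set Omega, MeasurableSet B → shift ⁻¹' B = B → m B = 0 ∨ m Bᶜ = 0

/-- The flip κ : κ(x)_k = x_{-k-1}. -/
def kappa (x : Omega) : Omega := fun k => x (-k - 1)

open scoped ENNReal

def shiftInv (x : Omega) : Omega := fun k => x (k + 1)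

lemma shift_shiftInv (x : Omega) : shift (shiftInv x) = x := by
  funext k; show x (k - 1 + 1) = x k; congr 1; ring
lemma shiftInv_shift (x : Omega) : shiftInv (shift x) = x := by
  funext k; show x (k + 1 - 1) = x k; congr 1; ring
lemma kappa_kappa (x : Omega) : kappa (kappa x) = x := by
  funext k; show x (-(-k - 1) - 1) = x k; congr 1; ring
lemma kappa_shift (x : Omega) : kappa (shift x) = shiftInv (kappa x) := by
  funext k; show x (-k - 1 - 1) = x (-(k + 1) - 1); congr 1; ring

lemma measurable_shift : Measurable shift :=
  measurable_pi_lambda _ fun k => measurable_pi_apply _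
lemma measurable_shiftInv : Measurable shiftInv :=
  measurable_pi_lambda _ fun k => measurable_pi_apply _
lemma measurable_kappa : Measurable kappa :=
  measurable_pi_lambda _ fun k => measurable_pi_apply _

lemma measurable_chi (θ : ℝ) : Measurable (chi θ) :=
  Measurable.comp (f := fun x : Omega => x (-1))
    (g := fun b : Bool => if b = false then (1 : ℝ) else -θ)
    measurable_from_top (measurable_pi_apply _)

noncomputable def gC (β θ : ℝ) (x : Omega) : ℝ≥0∞ := ENNReal.ofReal (Real.exp (-β * chi θ x))
noncomputable def gC' (β θ : ℝ) (x : Omega) : ℝ≥0∞ := ENNReal.ofReal (Real.exp (β * chi θ (shiftInv x)))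

lemma measurable_gC (β θ : ℝ) : Measurable (gC β θ) :=
  ENNReal.measurable_ofReal.comp (Real.measurable_exp.comp ((measurable_chi θ).const_mul (-β)))
lemma measurable_gC' (β θ : ℝ) : Measurable (gC' β θ) :=
  ENNReal.measurable_ofReal.comp (Real.measurable_exp.comp
    (((measurable_chi θ).comp measurable_shiftInv).const_mul β))

lemma image_shift (B : Set Omega) : shift '' B = shiftInv ⁻¹' B :=
  congrFun (Set.image_eq_preimage_of_inverse shiftInv_shift shift_shiftInv) B

lemma conformal_map_eq {β θ : ℝ} {m : Measure Omega} (h : IsConformal β θ m) :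
    m.map shiftInv = m.withDensity (gC β θ) := by
  ext B hB
  rw [Measure.map_apply measurable_shiftInv hB, withDensity_apply _ hB, ← image_shift]
  exact h B hB

lemma chi_shiftInv_eq (θ : ℝ) (x : Omega) : chi θ (shiftInv x) = chi θ (kappa x) := by
  unfold chi shiftInv kappa
  norm_num

lemma key {β θ : ℝ} {m : Measure Omega} (h : IsConformal β θ m)
    {A : Set Omega} (hA : MeasurableSet A) :
    m (shift ⁻¹' A) = ∫⁻ x in A, gC' β θ x ∂m := by
  have hmap := conformal_map_eq h
  have hF : Measurable fun y => A.indicator (gC' β θ) (shift y) :=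
    ((measurable_gC' β θ).indicator hA).comp measurable_shift
  have h1 : ∫⁻ x, A.indicator (gC' β θ) (shift (shiftInv x)) ∂m
      = ∫⁻ x, gC β θ x * A.indicator (gC' β θ) (shift x) ∂m := by
    rw [← lintegral_map hF measurable_shiftInv, hmap,
      lintegral_withDensity_eq_lintegral_mul _ (measurable_gC β θ) hF]
    rfl
  have hL : ∫⁻ x, A.indicator (gC' β θ) (shift (shiftInv x)) ∂m
      = ∫⁻ x in A, gC' β θ x ∂m := by
    simp_rw [shift_shiftInv]
    exact lintegral_indicator hA _
  have hR : ∀ x, gC β θ x * A.indicator (gC' β θ) (shift x)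
      = (shift ⁻¹' A).indicator 1 x := by
    intro x
    by_cases hx : shift x ∈ A
    · have hx' : x ∈ shift ⁻¹' A := hx
      rw [Set.indicator_of_mem hx, Set.indicator_of_mem hx']
      show gC β θ x * gC' β θ (shift x) = 1
      unfold gC gC'
      rw [shiftInv_shift, ← ENNReal.ofReal_mul (le_of_lt (Real.exp_pos _)), ← Real.exp_add]
      have : -β * chi θ x + β * chi θ x = 0 := by ring
      rw [this, Real.exp_zero, ENNReal.ofReal_one]
    · rw [Set.indicator_of_notMem hx, mul_zero]
      exact (Set.indicator_of_notMem hx (1 : Omega → ℝ≥0∞)).symm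
  calc m (shift ⁻¹' A) = ∫⁻ x, (shift ⁻¹' A).indicator 1 x ∂m :=
        (lintegral_indicator_one (measurable_shift hA)).symm
    _ = ∫⁻ x, gC β θ x * A.indicator (gC' β θ) (shift x) ∂m := by
        exact lintegral_congr fun x => (hR x).symm
    _ = ∫⁻ x, A.indicator (gC' β θ) (shift (shiftInv x)) ∂m := h1.symm
    _ = ∫⁻ x in A, gC' β θ x ∂m := hL

lemma part1 (β θ : ℝ) (m : Measure Omega) (h : IsConformal β θ m) :
    IsConformal (-β) θ (m.map kappa) := by
  intro B hB
  have hSB : MeasurableSet (shift '' B) := by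
    rw [image_shift]; exact measurable_shiftInv hB
  rw [Measure.map_apply measurable_kappa hSB]
  have hpre : kappa ⁻¹' (shift '' B) = shift ⁻¹' (kappa ⁻¹' B) := by
    rw [image_shift]
    ext x
    show shiftInv (kappa x) ∈ B ↔ kappa (shift x) ∈ B
    rw [kappa_shift]
  rw [hpre, key h (measurable_kappa hB)]
  have hmapInt : ∫⁻ x in B, gC (-β) θ x ∂(m.map kappa)
      = ∫⁻ x in kappa ⁻¹' B, gC (-β) θ (kappa x) ∂m :=
    setLIntegral_map hB (measurable_gC (-β) θ) measurable_kappa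
  exact (lintegral_congr fun x => by
    unfold gC' gC
    rw [neg_neg, chi_shiftInv_eq]).trans hmapInt.symm

lemma map_kappa_kappa (m : Measure Omega) : (m.map kappa).map kappa = m := by
  rw [Measure.map_map measurable_kappa measurable_kappa]
  have : kappa ∘ kappa = id := funext kappa_kappa
  rw [this, Measure.map_id]

lemma ergodic_map {m : Measure Omega} (h : ErgodicShift m) : ErgodicShift (m.map kappa) := by
  intro B hB hInv
  have hSI : shiftInv ⁻¹' B = B := by
    have h2 : shiftInv ⁻¹' (shift ⁻¹' B) = B := by
      ext x; show shift (shiftInv x) ∈ B ↔ x ∈ B; rw [shift_shiftInv]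
    rw [hInv] at h2; exact h2
  have hk : MeasurableSet (kappa ⁻¹' B) := measurable_kappa hB
  have hinv2 : shift ⁻¹' (kappa ⁻¹' B) = kappa ⁻¹' B := by
    ext x
    show kappa (shift x) ∈ B ↔ kappa x ∈ B
    rw [kappa_shift]
    exact Set.ext_iff.mp hSI (kappa x)
  rcases h _ hk hinv2 with h0 | h0
  · left; rwa [Measure.map_apply measurable_kappa hB]
  · right
    rw [Measure.map_apply measurable_kappa hB.compl, Set.preimage_compl]
    exact h0

theorem stmt1 (β θ : ℝ) (hθ : 0 < θ) :
    (∀ m : Measure Omega, IsProbabilityMeasure m → IsConformal β θ m →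
      IsProbabilityMeasure (m.map kappa) ∧ IsConformal (-β) θ (m.map kappa)) ∧
    Set.BijOn (fun m : Measure Omega => m.map kappa)
      {m | IsProbabilityMeasure m ∧ IsConformal β θ m}
      {m | IsProbabilityMeasure m ∧ IsConformal (-β) θ m} ∧
    (∀ m : Measure Omega, IsProbabilityMeasure m → IsConformal β θ m →
      (ErgodicShift m ↔ ErgodicShift (m.map kappa))) := by
  have main : ∀ β' : ℝ, ∀ m : Measure Omega, IsProbabilityMeasure m → IsConformal β' θ m →
      IsProbabilityMeasure (m.map kappa) ∧ IsConformal (-β') θ (m.map kappa) := by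
    intro β' m hm hc
    haveI := hm
    exact ⟨Measure.isProbabilityMeasure_map measurable_kappa.aemeasurable, part1 β' θ m hc⟩
  refine ⟨fun m hm hc => main β m hm hc, ⟨?_, ?_, ?_⟩, ?_⟩
  · intro m hm
    exact main β m hm.1 hm.2
  · intro m1 _ m2 _ heq
    have := congrArg (fun μ : Measure Omega => μ.map kappa) heq
    simpa [map_kappa_kappa] using this
  · intro m' hm'
    have h2 := main (-β) m' hm'.1 hm'.2
    rw [neg_neg] at h2
    exact ⟨m'.map kappa, h2, map_kappa_kappa m'⟩
  · intro m _ _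
    constructor
    · exact ergodic_map
    · intro h
      have := ergodic_map h
      rwa [map_kappa_kappa] at this

end Stmt1
end

section
/- For G = ℤ² and P = ℕ², the map Ω × ℤ → Y_u sending (x,t) to A(x,t) is a homeomorphism onto Y_u (where Ω × ℤ carries the product of the product topology on Ω and the discrete topology on ℤ, and Y_u carries the subspace topology of {0,1}^{ℤ²}), and it is ℤ²-equivariant: A((x,t) + v₁) = A(x,t) + v₁ and A((x,t) + v₂) = A(x,t) + v₂, where on the left ℤ² acts on Ω × ℤ by (x,t) + v₁ := (τ(x), t + x_{-1}), (x,t) + v₂ := (x, t+1), and on the right ℤ² acts on Y_u by translation of subsets. -/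
/-!
STATEMENT 2. For G = ℤ², P = ℕ², the map Ω × ℤ → Y_u, (x,t) ↦ A(x,t), is a
ℤ²-equivariant homeomorphism onto Y_u (with Y_u ⊆ {0,1}^{ℤ²} carrying the subspace
topology), where A(x,t) = {m·v₁ + n·v₂ : n ≤ a(x,t)_m}, v₁ = (1,0), v₂ = (1,1),
and equivariance is with respect to the generators v₁, v₂ acting on Ω × ℤ by
(x,t) + v₁ = (τx, t + x_{-1}) and (x,t) + v₂ = (x, t+1), and on Y_u by translation.
-/

open MeasureTheory Real

namespace Stmt2

abbrev Omega : Type := ℤ → Bool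

/-- The Bernoulli shift: τ(x)_k = x_{k-1}. -/
def shift (x : Omega) : Omega := fun k => x (k - 1)

/-- numerical value of a coordinate -/
def bval (b : Bool) : ℤ := if b then 1 else 0

/-- Partial sums: S x m = x₀ + ⋯ + x_{m-1} for m > 0, S x 0 = 0, and
S x m = -(x_{-1} + ⋯ + x_m) for m < 0, so that a(x,t)_m = t - S x m. -/
def S (x : Omega) (m : ℤ) : ℤ :=
  if 0 ≤ m then ∑ j ∈ Finset.range m.toNat, bval (x j)
  else - ∑ j ∈ Finset.range (-m).toNat, bval (x (-(j : ℤ) - 1))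

/-- a(x,t)_m = t - (x₀ + ⋯ + x_{m-1}) for m > 0, t for m = 0,
t + (x_{-1} + ⋯ + x_m) for m < 0. -/
def aseq (x : Omega) (t : ℤ) (m : ℤ) : ℤ := t - S x m

/-- A(x,t) = {m·v₁ + n·v₂ : n ≤ a(x,t)_m} ⊆ ℤ², as a Bool-valued characteristic
function on ℤ²; the point (p,q) = m·v₁ + n·v₂ has m = p - q, n = q. -/
def Amap (z : Omega × ℤ) : (ℤ × ℤ) → Bool :=
  fun p => decide (p.2 ≤ aseq z.1 z.2 (p.1 - p.2))

/-- Translation of a subset of ℤ² (encoded as a Bool-valued function) by v : "A + v". -/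
def transl (v : ℤ × ℤ) (A : (ℤ × ℤ) → Bool) : (ℤ × ℤ) → Bool := fun p => A (p - v)

/-- Y_u = {A ⊆ ℤ² : A ≠ ∅, A ≠ ℤ², -ℕ² + A ⊆ A}, inside {0,1}^{ℤ²}. -/
def Yu : Set ((ℤ × ℤ) → Bool) :=
  {A | (∃ p, A p = true) ∧ (∃ p, A p = false) ∧
    ∀ p q : ℤ × ℤ, 0 ≤ q.1 → 0 ≤ q.2 → A p = true → A (p - q) = true}

lemma bval_nonneg (b : Bool) : 0 ≤ bval b := by cases b <;> simp [bval]
lemma bval_le_one (b : Bool) : bval b ≤ 1 := by cases b <;> simp [bval]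

lemma S_zero (x : Omega) : S x 0 = 0 := by simp [S]

lemma S_succ (x : Omega) (m : ℤ) : S x (m + 1) = S x m + bval (x m) := by
  rcases le_or_gt 0 m with h | h
  · have h1 : (0:ℤ) ≤ m + 1 := by omega
    have ht : (m + 1).toNat = m.toNat + 1 := by omega
    simp only [S, if_pos h, if_pos h1, ht, Finset.sum_range_succ,
      Int.toNat_of_nonneg h]
  · have h0 : ¬ (0:ℤ) ≤ m := by omega
    rcases eq_or_lt_of_le (show m + 1 ≤ 0 by omega) with h1 | h1
    · have hm : m = -1 := by omega
      subst hm
      norm_num [S]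
    · have h1' : ¬ (0:ℤ) ≤ m + 1 := by omega
      have ht : (-m).toNat = (-(m+1)).toNat + 1 := by omega
      simp only [S, if_neg h0, if_neg h1', ht, Finset.sum_range_succ]
      have he : (-(((-(m+1)).toNat : ℤ)) - 1) = m := by omega
      rw [he]; ring

lemma S_add_nat (x : Omega) (m : ℤ) (k : ℕ) :
    S x m ≤ S x (m + k) ∧ S x (m + k) ≤ S x m + k := by
  induction k with
  | zero => simp
  | succ k ih =>
    have h := S_succ x (m + k)
    have h1 := bval_nonneg (x (m + k))
    have h2 := bval_le_one (x (m + k))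
    have e : m + ((k:ℤ) + 1) = (m + k) + 1 := by ring
    push_cast
    rw [e, h]
    push_cast at ih
    omega

lemma S_mono (x : Omega) {m m' : ℤ} (h : m ≤ m') :
    S x m ≤ S x m' ∧ S x m' ≤ S x m + (m' - m) := by
  obtain ⟨k, hk⟩ : ∃ k : ℕ, m' = m + k := ⟨(m' - m).toNat, by omega⟩
  subst hk
  have := S_add_nat x m k
  omega

lemma mem_closure' {A} (hA : A ∈ Yu) {u v : ℤ} (a b : ℤ) (ha : 0 ≤ a) (hb : 0 ≤ b)
    (hp : A (u, v) = true) : A (u - a, v - b) = true :=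
  hA.2.2 (u, v) (a, b) ha hb hp

lemma L_down {A} (hA : A ∈ Yu) {m n : ℤ} (h : A (m + n, n) = true) (k : ℤ) (hk : 0 ≤ k) :
    A (m + (n - k), n - k) = true := by
  have := mem_closure' hA k k hk hk h
  rwa [show m + n - k = m + (n - k) from by ring] at this

lemma exists_greatest {A} (hA : A ∈ Yu) (m : ℤ) :
    ∃ n : ℤ, (A (m + n, n) = true) ∧ ∀ n', A (m + n', n') = true → n' ≤ n := by
  apply Int.exists_greatest_of_bdd
  · obtain ⟨p₀, hp₀⟩ := hA.2.1
    refine ⟨max (p₀.1 - m) p₀.2 - 1, fun n hn => ?_⟩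
    by_contra hlt
    push_neg at hlt
    have h1 : (0:ℤ) ≤ m + n - p₀.1 := by omega
    have h2 : (0:ℤ) ≤ n - p₀.2 := by omega
    have := mem_closure' hA _ _ h1 h2 hn
    rw [show m + n - (m + n - p₀.1) = p₀.1 from by ring,
      show n - (n - p₀.2) = p₀.2 from by ring, Prod.mk.eta, hp₀] at this
    exact Bool.noConfusion this
  · obtain ⟨p₁, hp₁⟩ := hA.1
    set n := min (p₁.1 - m) p₁.2 with hn
    refine ⟨n, ?_⟩
    have h1 : (0:ℤ) ≤ p₁.1 - (m + n) := by omega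
    have h2 : (0:ℤ) ≤ p₁.2 - n := by omega
    have := mem_closure' hA _ _ h1 h2 (by rw [Prod.mk.eta]; exact hp₁)
    rwa [show p₁.1 - (p₁.1 - (m + n)) = m + n from by ring,
      show p₁.2 - (p₁.2 - n) = n from by ring] at this

lemma aA_exu {A} (hA : A ∈ Yu) (m : ℤ) :
    ∃! n : ℤ, A (m + n, n) = true ∧ A (m + n + 1, n + 1) = false := by
  obtain ⟨n, hn, hmax⟩ := exists_greatest hA m
  refine ⟨n, ⟨hn, ?_⟩, ?_⟩
  · rcases Bool.eq_false_or_eq_true (A (m + n + 1, n + 1)) with h | h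
    · have := hmax (n + 1) (by rwa [show m + (n + 1) = m + n + 1 from by ring])
      omega
    · exact h
  · rintro n' ⟨hn', hsucc'⟩
    have hle : n' ≤ n := hmax n' hn'
    rcases eq_or_lt_of_le hle with h | h
    · exact h
    · exfalso
      have := L_down hA hn (n - (n' + 1)) (by omega)
      rw [show n - (n - (n' + 1)) = n' + 1 from by ring,
        show m + (n' + 1) = m + n' + 1 from by ring, hsucc'] at this
      exact Bool.noConfusion this

open Classical in
noncomputable def aA (A : (ℤ × ℤ) → Bool) (m : ℤ) : ℤ :=
  if h : ∃ n : ℤ, A (m + n, n) = true ∧ A (m + n + 1, n + 1) = false then h.choose else 0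

lemma aA_spec {A} (hA : A ∈ Yu) (m : ℤ) :
    A (m + aA A m, aA A m) = true ∧ A (m + aA A m + 1, aA A m + 1) = false := by
  have h := aA_exu hA m
  rw [aA]
  rw [dif_pos h.exists]
  exact h.exists.choose_spec

lemma aA_eq {A} (hA : A ∈ Yu) {m n : ℤ}
    (h : A (m + n, n) = true ∧ A (m + n + 1, n + 1) = false) : aA A m = n :=
  (aA_exu hA m).unique (aA_spec hA m) h

lemma le_aA {A} (hA : A ∈ Yu) {m n' : ℤ} (h : A (m + n', n') = true) : n' ≤ aA A m := by
  by_contra hlt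
  push_neg at hlt
  have := L_down hA h (n' - (aA A m + 1)) (by omega)
  rw [show n' - (n' - (aA A m + 1)) = aA A m + 1 from by ring,
    show m + (aA A m + 1) = m + aA A m + 1 from by ring] at this
  have h2 := (aA_spec hA m).2
  rw [this] at h2
  exact Bool.noConfusion h2

lemma aA_succ_le {A} (hA : A ∈ Yu) (m : ℤ) :
    aA A (m + 1) ≤ aA A m ∧ aA A m - 1 ≤ aA A (m + 1) := by
  constructor
  · have h := (aA_spec hA (m + 1)).1
    have := mem_closure' hA 1 0 one_pos.le le_rfl h
    rw [show m + 1 + aA A (m + 1) - 1 = m + aA A (m + 1) from by ring, sub_zero] at this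
    exact le_aA hA this
  · have h := (aA_spec hA m).1
    have := mem_closure' hA 0 1 le_rfl one_pos.le h
    rw [sub_zero, show m + aA A m = (m + 1) + (aA A m - 1) from by ring] at this
    have h2 : aA A m - 1 ≤ aA A (m + 1) := le_aA hA this
    exact h2

noncomputable def invA (A : (ℤ × ℤ) → Bool) : Omega × ℤ :=
  (fun m => decide (aA A m - aA A (m + 1) = 1), aA A 0)

lemma bval_invA {A} (hA : A ∈ Yu) (m : ℤ) :
    bval ((invA A).1 m) = aA A m - aA A (m + 1) := by
  rcases aA_succ_le hA m with ⟨h1, h2⟩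
  by_cases h : aA A m - aA A (m + 1) = 1
  · simp [invA, bval, h]
  · have hf : (invA A).1 m = false := by simp [invA, h]
    rw [hf]
    simp only [bval, Bool.false_eq_true, if_false]
    omega

lemma S_invA {A} (hA : A ∈ Yu) (m : ℤ) : S (invA A).1 m = aA A 0 - aA A m := by
  induction m using Int.induction_on with
  | zero => simp [S_zero]
  | succ k ih =>
    rw [S_succ, ih, bval_invA hA]
    ring
  | pred k ih =>
    have hs := S_succ (invA A).1 (-(k:ℤ) - 1)
    have hb := bval_invA hA (-(k:ℤ) - 1)
    rw [hb] at hs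
    rw [show (-(k:ℤ) - 1) + 1 = -(k:ℤ) from by ring] at hs
    omega

lemma Amap_mem (z : Omega × ℤ) : Amap z ∈ Yu := by
  refine ⟨⟨(z.2, z.2), ?_⟩, ⟨(z.2 + 1, z.2 + 1), ?_⟩, ?_⟩
  · simp [Amap, aseq, S_zero]
  · simp only [Amap, aseq, sub_self, S_zero, sub_zero, decide_eq_false_iff_not]
    omega
  · intro p q hq1 hq2 hp
    simp only [Amap, decide_eq_true_eq, aseq, Prod.fst_sub, Prod.snd_sub] at hp ⊢
    replace hp := of_decide_eq_true hp; apply decide_eq_true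
    rcases le_or_gt (p.1 - q.1 - (p.2 - q.2)) (p.1 - p.2) with h | h
    · have := S_mono z.1 h
      omega
    · have := S_mono z.1 h.le
      omega

lemma aA_Amap (z : Omega × ℤ) (m : ℤ) : aA (Amap z) m = aseq z.1 z.2 m := by
  apply aA_eq (Amap_mem z)
  constructor
  · simp only [Amap]
    rw [show m + aseq z.1 z.2 m - aseq z.1 z.2 m = m from by ring]
    simp
  · simp only [Amap]
    rw [show m + aseq z.1 z.2 m + 1 - (aseq z.1 z.2 m + 1) = m from by ring]
    simp

lemma left_inv_lemma (z : Omega × ℤ) : invA (Amap z) = z := by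
  obtain ⟨x, t⟩ := z
  have ha : ∀ m, aA (Amap (x, t)) m = aseq x t m := aA_Amap (x, t)
  refine Prod.ext ?_ ?_
  · funext m
    show decide (aA (Amap (x, t)) m - aA (Amap (x, t)) (m + 1) = 1) = x m
    rw [ha m, ha (m + 1),
      show aseq x t m - aseq x t (m + 1) = bval (x m) from by
        unfold aseq; rw [S_succ]; ring]
    cases hx : x m <;> simp [bval]
  · show aA (Amap (x, t)) 0 = t
    rw [ha 0]
    simp [aseq, S_zero]

lemma A_eq_decide {A} (hA : A ∈ Yu) (p : ℤ × ℤ) :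
    A p = decide (p.2 ≤ aA A (p.1 - p.2)) := by
  set m := p.1 - p.2 with hm
  by_cases h : p.2 ≤ aA A m
  · have := L_down hA (aA_spec hA m).1 (aA A m - p.2) (by omega)
    rw [show aA A m - (aA A m - p.2) = p.2 from by ring,
      show m + p.2 = p.1 from by omega, Prod.mk.eta] at this
    simp [h, this]
  · have hf : A p = false := by
      rcases Bool.eq_false_or_eq_true (A p) with h' | h'
      · exfalso
        apply h
        apply le_aA hA
        rw [show m + p.2 = p.1 from by omega, Prod.mk.eta]
        exact h'
      · exact h'
    simp [hf, h]

lemma right_inv_lemma {A} (hA : A ∈ Yu) : Amap (invA A) = A := by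
  funext p
  rw [A_eq_decide hA p]
  simp only [Amap]
  rw [decide_eq_decide]
  unfold aseq
  rw [show (invA A).2 = aA A 0 from rfl, S_invA hA]
  omega

lemma continuous_S (m : ℤ) : Continuous (fun x : Omega => S x m) := by
  rcases le_or_gt 0 m with h | h
  · simp only [S, if_pos h]
    exact continuous_finset_sum _ fun j _ =>
      (continuous_of_discreteTopology (f := bval)).comp (continuous_apply ((j : ℤ)))
  · simp only [S, if_neg (not_le.mpr h)]
    apply Continuous.neg
    exact continuous_finset_sum _ fun j _ =>
      (continuous_of_discreteTopology (f := bval)).comp (continuous_apply (-(j : ℤ) - 1))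

lemma continuous_aA (m : ℤ) :
    Continuous (fun A : ↥Yu => aA (A : (ℤ × ℤ) → Bool) m) := by
  rw [continuous_discrete_rng]
  intro n
  have hset : (fun A : ↥Yu => aA (A : (ℤ × ℤ) → Bool) m) ⁻¹' {n} =
      (fun A : ↥Yu => (((A : (ℤ × ℤ) → Bool)) (m + n, n),
        ((A : (ℤ × ℤ) → Bool)) (m + n + 1, n + 1))) ⁻¹' {(true, false)} := by
    ext A
    simp only [Set.mem_preimage, Set.mem_singleton_iff, Prod.mk.injEq]
    constructor
    · rintro rfl
      exact aA_spec A.2 m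
    · intro h
      exact aA_eq A.2 h
  rw [hset]
  exact (Continuous.prodMk
      ((continuous_apply _).comp continuous_subtype_val)
      ((continuous_apply _).comp continuous_subtype_val)).isOpen_preimage
      _ (isOpen_discrete _)

noncomputable def theHomeo : (Omega × ℤ) ≃ₜ ↥Yu where
  toFun z := ⟨Amap z, Amap_mem z⟩
  invFun A := invA (A : (ℤ × ℤ) → Bool)
  left_inv z := left_inv_lemma z
  right_inv A := Subtype.ext (right_inv_lemma A.2)
  continuous_toFun := by
    apply Continuous.subtype_mk
    apply continuous_pi
    intro p
    show Continuous fun z : Omega × ℤ => decide (p.2 ≤ aseq z.1 z.2 (p.1 - p.2))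
    exact (continuous_of_discreteTopology
        (f := fun q : ℤ × ℤ => decide (p.2 ≤ q.1 - q.2))).comp
      (continuous_snd.prodMk ((continuous_S (p.1 - p.2)).comp continuous_fst))
  continuous_invFun := by
    apply Continuous.prodMk
    · apply continuous_pi
      intro m
      exact (continuous_of_discreteTopology
          (f := fun q : ℤ × ℤ => decide (q.1 - q.2 = 1))).comp
        ((continuous_aA m).prodMk (continuous_aA (m + 1)))
    · exact continuous_aA 0

lemma S_neg_one (x : Omega) : S x (-1) = -bval (x (-1)) := by
  norm_num [S]

lemma S_shift (x : Omega) (m : ℤ) : S (shift x) m = S x (m - 1) + bval (x (-1)) := by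
  induction m using Int.induction_on with
  | zero =>
    rw [S_zero, show (0:ℤ) - 1 = -1 from by ring, S_neg_one]
    ring
  | succ k ih =>
    rw [S_succ, ih]
    have e1 : shift x (k : ℤ) = x ((k : ℤ) - 1) := rfl
    have h2 := S_succ x ((k : ℤ) - 1)
    rw [show ((k:ℤ) - 1) + 1 = (k:ℤ) from by ring] at h2
    rw [e1, show ((k:ℤ) + 1) - 1 = (k:ℤ) from by ring]
    omega
  | pred k ih =>
    have h1 := S_succ (shift x) (-(k:ℤ) - 1)
    have h2 := S_succ x (-(k:ℤ) - 2)
    rw [show (-(k:ℤ) - 1) + 1 = -(k:ℤ) from by ring] at h1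
    rw [show (-(k:ℤ) - 2) + 1 = -(k:ℤ) - 1 from by ring] at h2
    have e1 : shift x (-(k:ℤ) - 1) = x (-(k:ℤ) - 2) := by
      unfold shift
      congr 1
      ring
    rw [e1] at h1
    rw [show (-(k:ℤ) - 1) - 1 = -(k:ℤ) - 2 from by ring]
    omega

theorem stmt2 :
    (∃ h : (Omega × ℤ) ≃ₜ ↥Yu, ∀ z : Omega × ℤ, (h z : (ℤ × ℤ) → Bool) = Amap z) ∧
    (∀ x : Omega, ∀ t : ℤ,
      Amap (shift x, t + bval (x (-1))) = transl (1, 0) (Amap (x, t)) ∧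
      Amap (x, t + 1) = transl (1, 1) (Amap (x, t))) := by
  constructor
  · exact ⟨theHomeo, fun z => rfl⟩
  · intro x t
    constructor
    · funext p
      simp only [Amap, transl, aseq, Prod.fst_sub, Prod.snd_sub]
      apply decide_eq_decide.mpr
      rw [S_shift]
      rw [show p.1 - p.2 - 1 = p.1 - 1 - (p.2 - 0) from by ring]
      omega
    · funext p
      simp only [Amap, transl, aseq, Prod.fst_sub, Prod.snd_sub]
      apply decide_eq_decide.mpr
      rw [show p.1 - 1 - (p.2 - 1) = p.1 - p.2 from by ring]
      omega

end Stmt2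
end

section
/- Let β ∈ ℝ and θ > 0. For a Borel probability measure m on Ω define the Borel measure m̄ on Ω × ℤ by m̄(E × {n}) := e^{-nβ(1+θ)} m(E) for Borel E ⊆ Ω and n ∈ ℤ. Then the map m ↦ m̄ is a bijection from the set of e^{-βχ}-conformal Borel probability measures on Ω onto the set of e^{-βc_θ}-conformal nonzero Radon measures μ on Ω × ℤ satisfying μ(Ω × {0}) = 1. Moreover, m is ergodic for τ if and only if m̄ is ergodic for the ℤ²-action on Ω × ℤ. -/
/-!
STATEMENT 3. Let β ∈ ℝ, θ > 0. For a Borel probability measure m on Ω define the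
measure m̄ on Ω × ℤ by m̄(E × {n}) = e^{-nβ(1+θ)} m(E). Then m ↦ m̄ is a bijection
from the set of e^{-βχ}-conformal Borel probability measures on Ω onto the set of
e^{-βc_θ}-conformal nonzero Radon measures μ on Ω × ℤ with μ(Ω × {0}) = 1.
Moreover m is ergodic for τ iff m̄ is ergodic for the ℤ²-action on Ω × ℤ.
-/

open MeasureTheory Real
open ENNReal

namespace Stmt3

abbrev Omega : Type := ℤ → Bool

def shift (x : Omega) : Omega := fun k => x (k - 1)

def bval (b : Bool) : ℤ := if b then 1 else 0

noncomputable def chi (θ : ℝ) (x : Omega) : ℝ := if x (-1) = false then 1 else -θ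

/-- m is e^{-βχ}-conformal. -/
def IsConformal (β θ : ℝ) (m : Measure Omega) : Prop :=
  ∀ B : Set Omega, MeasurableSet B →
    m (shift '' B) = ∫⁻ x in B, ENNReal.ofReal (Real.exp (-β * chi θ x)) ∂m

/-- m is ergodic for the shift. -/
def ErgodicShift (m : Measure Omega) : Prop :=
  ∀ B : Set Omega, MeasurableSet B → shift ⁻¹' B = B → m B = 0 ∨ m Bᶜ = 0

/-- Cocycle sums: S x m = x₀ + ⋯ + x_{m-1} for m > 0, 0 for m = 0,
-(x_{-1} + ⋯ + x_m) for m < 0. -/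
def S (x : Omega) (m : ℤ) : ℤ :=
  if 0 ≤ m then ∑ j ∈ Finset.range m.toNat, bval (x j)
  else - ∑ j ∈ Finset.range (-m).toNat, bval (x (-(j : ℤ) - 1))

/-- The ℤ²-action on Ω × ℤ generated by v₁ = (1,0), v₂ = (1,1) with
(x,t) + v₁ = (τx, t + x_{-1}) and (x,t) + v₂ = (x, t+1);
the element (m,n) = (m-n)·v₁ + n·v₂ acts by
(x,t) ↦ (τ^{m-n} x, t + n + (cocycle)), where the cocycle is -S x (n-m). -/
def act (v : ℤ × ℤ) (z : Omega × ℤ) : Omega × ℤ :=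
  (fun k => z.1 (k - (v.1 - v.2)), z.2 + v.2 - S z.1 (v.2 - v.1))

/-- The homomorphism c_θ : ℤ² → ℝ, c_θ(m,n) = m + nθ. -/
noncomputable def cθ (θ : ℝ) (v : ℤ × ℤ) : ℝ := (v.1 : ℝ) + (v.2 : ℝ) * θ

/-- μ is a Radon measure on Ω × ℤ : finite on compact sets. -/
def IsRadon (μ : Measure (Omega × ℤ)) : Prop :=
  ∀ K : Set (Omega × ℤ), IsCompact K → μ K < ⊤

/-- μ is e^{-βc_θ}-conformal for the ℤ²-action. -/
def IsConformalZ2 (β θ : ℝ) (μ : Measure (Omega × ℤ)) : Prop :=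
  ∀ v : ℤ × ℤ, ∀ E : Set (Omega × ℤ), MeasurableSet E →
    μ (act v '' E) = ENNReal.ofReal (Real.exp (-β * cθ θ v)) * μ E

/-- μ is ergodic for the ℤ²-action. -/
def ErgodicZ2 (μ : Measure (Omega × ℤ)) : Prop :=
  ∀ E : Set (Omega × ℤ), MeasurableSet E → (∀ v : ℤ × ℤ, act v '' E = E) →
    μ E = 0 ∨ μ Eᶜ = 0

/-- The measure m̄ on Ω × ℤ with m̄(E × {n}) = e^{-nβ(1+θ)} m(E). -/
noncomputable def mbar (β θ : ℝ) (m : Measure Omega) : Measure (Omega × ℤ) :=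
  Measure.sum fun n : ℤ =>
    ENNReal.ofReal (Real.exp (-(n : ℝ) * β * (1 + θ))) •
      Measure.map (fun x => (x, n)) m


lemma S_zero (x : Omega) : S x 0 = 0 := by simp [S]

lemma S_succ (x : Omega) (m : ℤ) : S x (m + 1) = S x m + bval (x m) := by
  rcases le_or_gt 0 m with h | h
  · have h1 : 0 ≤ m + 1 := by omega
    have h2 : (m+1).toNat = m.toNat + 1 := by omega
    simp only [S, if_pos h, if_pos h1, h2, Finset.sum_range_succ,
      Int.toNat_of_nonneg h]
  · rcases eq_or_lt_of_le (by omega : m + 1 ≤ 0) with h1 | h1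
    · have hm : m = -1 := by omega
      subst hm
      simp [S, Finset.sum_range_one]
    · have h2 : ¬ (0 ≤ m + 1) := by omega
      have h3 : ¬ (0 ≤ m) := by omega
      have h4 : (-m).toNat = (-(m+1)).toNat + 1 := by omega
      simp only [S, if_neg h2, if_neg h3, h4, Finset.sum_range_succ]
      have h5 : (-((-(m+1)).toNat : ℤ) - 1) = m := by omega
      rw [h5]
      ring

lemma S_shifted (x : Omega) (e : ℤ) : ∀ d : ℤ, S (fun k => x (k - e)) d = S x (d - e) - S x (-e) := by
  intro d
  induction d using Int.induction_on with
  | zero => simp [S_zero]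
  | succ n ih =>
      rw [S_succ, ih]
      have h : (n : ℤ) + 1 - e = (n - e) + 1 := by ring
      rw [h, S_succ]
      ring
  | pred n ih =>
      have h1 : S (fun k => x (k - e)) (-(n:ℤ)) = S (fun k => x (k - e)) (-(n:ℤ) - 1) + bval (x (-(n:ℤ) - 1 - e)) := by
        have := S_succ (fun k => x (k - e)) (-(n:ℤ) - 1)
        simpa using this
      have h2 : S x (-(n:ℤ) - e) = S x (-(n:ℤ) - 1 - e) + bval (x (-(n:ℤ) - 1 - e)) := by
        have := S_succ x (-(n:ℤ) - 1 - e)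
        have h : -(n:ℤ) - 1 - e + 1 = -(n:ℤ) - e := by ring
        rwa [h] at this
      omega

lemma act_zero (z : Omega × ℤ) : act 0 z = z := by
  simp [act, S_zero]

lemma act_add (v w : ℤ × ℤ) (z : Omega × ℤ) : act (v + w) z = act v (act w z) := by
  unfold act
  refine Prod.ext ?_ ?_
  · funext k
    simp only
    congr 1
    simp [Prod.fst_add, Prod.snd_add]
    ring
  · simp only [Prod.fst_add, Prod.snd_add]
    rw [S_shifted]
    have h : v.2 - v.1 - (w.1 - w.2) = v.2 + w.2 - (v.1 + w.1) := by ring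
    have h2 : -(w.1 - w.2) = w.2 - w.1 := by ring
    rw [h, h2]
    ring

lemma act_neg_act (v : ℤ × ℤ) (z : Omega × ℤ) : act (-v) (act v z) = z := by
  rw [← act_add]
  simp [act_zero]

lemma act_act_neg (v : ℤ × ℤ) (z : Omega × ℤ) : act v (act (-v) z) = z := by
  rw [← act_add]
  simp [act_zero]

lemma act_image_eq_preimage (v : ℤ × ℤ) (E : Set (Omega × ℤ)) :
    act v '' E = act (-v) ⁻¹' E := by
  ext z
  constructor
  · rintro ⟨w, hw, rfl⟩
    simpa [Set.mem_preimage, act_neg_act] using hw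
  · intro hz
    exact ⟨act (-v) z, hz, act_act_neg v z⟩

lemma measurable_bval_eval (j : ℤ) : Measurable fun x : Omega => bval (x j) := by
  have h1 : Measurable fun x : Omega => x j := measurable_pi_apply j
  have h2 : Measurable bval := measurable_from_top
  exact h2.comp h1

lemma measurable_S (c : ℤ) : Measurable (fun x : Omega => S x c) := by
  unfold S
  rcases le_or_gt 0 c with h | h
  · simp only [if_pos h]
    exact Finset.measurable_sum _ (fun j _ => measurable_bval_eval _)
  · simp only [if_neg (not_le.mpr h)]
    exact (Finset.measurable_sum _ (fun j _ => measurable_bval_eval _)).neg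

lemma measurable_act (v : ℤ × ℤ) : Measurable (act v) := by
  apply Measurable.prod
  · show Measurable fun z : Omega × ℤ => (fun k => z.1 (k - (v.1 - v.2)))
    refine measurable_pi_lambda _ (fun k => ?_)
    have h1 : Measurable fun z : Omega × ℤ => z.1 := measurable_fst
    exact (measurable_pi_apply (k - (v.1 - v.2))).comp h1
  · show Measurable fun z : Omega × ℤ => z.2 + v.2 - S z.1 (v.2 - v.1)
    have h1 : Measurable fun z : Omega × ℤ => S z.1 (v.2 - v.1) :=
      (measurable_S _).comp measurable_fst
    exact (measurable_snd.add_const _).sub h1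

lemma measurableSet_act_image {E : Set (Omega × ℤ)} (hE : MeasurableSet E) (v : ℤ × ℤ) :
    MeasurableSet (act v '' E) := by
  rw [act_image_eq_preimage]
  exact (measurable_act _) hE

def unshift (x : Omega) : Omega := fun k => x (k + 1)

lemma shift_unshift (x : Omega) : shift (unshift x) = x := by
  funext k; simp [shift, unshift]

lemma unshift_shift (x : Omega) : unshift (shift x) = x := by
  funext k; simp [shift, unshift]

lemma shift_bijective : Function.Bijective shift :=
  Function.bijective_iff_has_inverse.mpr ⟨unshift, unshift_shift, shift_unshift⟩

lemma measurable_shift : Measurable shift :=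
  measurable_pi_lambda _ (fun k => measurable_pi_apply _)

lemma measurable_unshift : Measurable unshift :=
  measurable_pi_lambda _ (fun k => measurable_pi_apply _)

lemma shift_image_eq_preimage (B : Set Omega) : shift '' B = unshift ⁻¹' B := by
  ext y
  constructor
  · rintro ⟨x, hx, rfl⟩; simpa [Set.mem_preimage, unshift_shift] using hx
  · intro h; exact ⟨unshift y, h, shift_unshift y⟩

lemma measurableSet_shift_image {B : Set Omega} (hB : MeasurableSet B) :
    MeasurableSet (shift '' B) := by
  rw [shift_image_eq_preimage]; exact measurable_unshift hB

/-- induction over ℤ² using generators (1,0) and (1,1). -/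
lemma z2_induction (Q : ℤ × ℤ → Prop) (h0 : Q 0) (h1 : Q (1,0)) (h2 : Q (1,1))
    (hadd : ∀ v w, Q v → Q w → Q (v+w)) (hneg : ∀ v, Q v → Q (-v)) : ∀ v, Q v := by
  have h01 : Q (0,1) := by
    have := hadd _ _ h2 (hneg _ h1)
    simpa using this
  have hm : ∀ m : ℤ, Q (m, 0) := by
    intro m
    induction m using Int.induction_on with
    | zero => exact h0
    | succ n ih => have := hadd _ _ ih h1; simpa using this
    | pred n ih => have := hadd _ _ ih (hneg _ h1); simpa [sub_eq_add_neg] using this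
  have hn2 : ∀ n : ℤ, Q (0, n) := by
    intro n
    induction n using Int.induction_on with
    | zero => exact h0
    | succ n ih => have := hadd _ _ ih h01; simpa using this
    | pred n ih => have := hadd _ _ ih (hneg _ h01); simpa [sub_eq_add_neg] using this
  intro v
  have := hadd _ _ (hm v.1) (hn2 v.2)
  simpa using this

noncomputable def cfac (β θ : ℝ) (n : ℤ) : ℝ≥0∞ :=
  ENNReal.ofReal (Real.exp (-(n : ℝ) * β * (1 + θ)))

lemma ofReal_exp_mul (a b : ℝ) :
    ENNReal.ofReal (Real.exp a) * ENNReal.ofReal (Real.exp b)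
      = ENNReal.ofReal (Real.exp (a + b)) := by
  rw [← ENNReal.ofReal_mul (exp_nonneg a), ← Real.exp_add]

lemma ofReal_exp_ne_zero (a : ℝ) : ENNReal.ofReal (Real.exp a) ≠ 0 := by
  simp [ENNReal.ofReal_eq_zero, not_le, exp_pos]

lemma ofReal_exp_ne_top (a : ℝ) : ENNReal.ofReal (Real.exp a) ≠ ⊤ := ENNReal.ofReal_ne_top

lemma cfac_zero (β θ : ℝ) : cfac β θ 0 = 1 := by simp [cfac]

lemma cfac_add_one (β θ : ℝ) (n : ℤ) :
    cfac β θ (n + 1) = ENNReal.ofReal (Real.exp (-β * (1 + θ))) * cfac β θ n := by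
  rw [cfac, cfac, ofReal_exp_mul]
  congr 1
  push_cast
  ring

def sec (n : ℤ) (E : Set (Omega × ℤ)) : Set Omega := (fun x => (x, n)) ⁻¹' E

lemma measurable_mk (n : ℤ) : Measurable fun x : Omega => (x, n) :=
  measurable_id.prodMk measurable_const

lemma measurableSet_sec {E : Set (Omega × ℤ)} (hE : MeasurableSet E) (n : ℤ) :
    MeasurableSet (sec n E) := (measurable_mk n) hE

lemma mbar_apply (β θ : ℝ) (m : Measure Omega) {E : Set (Omega × ℤ)} (hE : MeasurableSet E) :
    mbar β θ m E = ∑' n : ℤ, cfac β θ n * m (sec n E) := by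
  rw [mbar, Measure.sum_apply _ hE]
  congr 1
  funext n
  rw [Measure.smul_apply, Measure.map_apply (measurable_mk n) hE]
  rfl

lemma S_neg_one (x : Omega) : S x (-1) = -bval (x (-1)) := by
  simp [S, Finset.sum_range_one]

lemma act_11 (z : Omega × ℤ) : act (1,1) z = (z.1, z.2 + 1) := by
  unfold act
  refine Prod.ext ?_ ?_
  · funext k; simp
  · simp [S_zero]

lemma act_nn (n : ℤ) (z : Omega × ℤ) : act (n,n) z = (z.1, z.2 + n) := by
  unfold act
  refine Prod.ext ?_ ?_
  · funext k; simp
  · simp [S_zero]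

lemma act_10 (z : Omega × ℤ) : act (1,0) z = (shift z.1, z.2 + bval (z.1 (-1))) := by
  unfold act
  refine Prod.ext ?_ ?_
  · funext k; rfl
  · show z.2 + 0 - S z.1 (0 - 1) = _
    rw [(by norm_num : (0:ℤ) - 1 = -1), S_neg_one z.1]
    ring

def A : Set Omega := {x | x (-1) = false}

lemma measurableSet_A : MeasurableSet A := by
  have : A = (fun x : Omega => x (-1)) ⁻¹' {false} := rfl
  rw [this]
  exact (measurable_pi_apply _) trivial



lemma shift_mem_A_iff (x : Omega) : shift x 0 = x (-1) := by
  simp [shift]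

/-- section of image under act (1,1) -/
lemma sec_act11 (E : Set (Omega × ℤ)) (n : ℤ) :
    sec n (act (1,1) '' E) = sec (n-1) E := by
  ext y
  simp only [sec, Set.mem_preimage, Set.mem_image]
  constructor
  · rintro ⟨⟨x, t⟩, hxt, h⟩
    rw [act_11] at h
    obtain ⟨h1, h2⟩ := Prod.mk.injEq .. ▸ h
    simp only at h1 h2
    subst h1
    have : t = n - 1 := by omega
    subst this
    exact hxt
  · intro h
    exact ⟨(y, n-1), h, by rw [act_11]; simp⟩

/-- section of image under act (1,0) -/
lemma sec_act10 (E : Set (Omega × ℤ)) (n : ℤ) :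
    sec n (act (1,0) '' E) =
      shift '' (sec n E ∩ A) ∪ shift '' (sec (n-1) E ∩ Aᶜ) := by
  ext y
  simp only [sec, Set.mem_preimage, Set.mem_image, Set.mem_union, Set.mem_inter_iff]
  constructor
  · rintro ⟨⟨x, t⟩, hxt, h⟩
    rw [act_10] at h
    obtain ⟨h1, h2⟩ := Prod.mk.injEq .. ▸ h
    simp only at h1 h2
    subst h1
    by_cases hx : x (-1) = false
    · left
      refine ⟨x, ⟨?_, hx⟩, rfl⟩
      have : t = n := by simp [bval, hx] at h2; omega
      subst this; exact hxt
    · right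
      refine ⟨x, ⟨?_, hx⟩, rfl⟩
      have hxt' : x (-1) = true := by simpa using hx
      have : t = n - 1 := by simp [bval, hxt'] at h2; omega
      subst this; exact hxt
  · rintro (⟨x, ⟨hx, hxa⟩, rfl⟩ | ⟨x, ⟨hx, hxa⟩, rfl⟩)
    · exact ⟨(x, n), hx, by rw [act_10]; simp [bval, (show x (-1) = false from hxa)]⟩
    · have hxa' : x (-1) = true := by simpa [A] using hxa
      exact ⟨(x, n-1), hx, by rw [act_10]; simp [bval, hxa']⟩

/-- images under act (1,1) / (n,n) of product sets -/
lemma act_nn_image_prod (n : ℤ) (C : Set Omega) (s : ℤ) :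
    act (n,n) '' (C ×ˢ ({s} : Set ℤ)) = C ×ˢ ({s + n} : Set ℤ) := by
  ext ⟨y, t⟩
  simp only [Set.mem_image, Set.mem_prod, Set.mem_singleton_iff]
  constructor
  · rintro ⟨⟨x, u⟩, ⟨hx, hu⟩, h⟩
    rw [act_nn] at h
    obtain ⟨h1, h2⟩ := Prod.mk.injEq .. ▸ h
    simp only at h1 h2
    subst h1; subst hu
    exact ⟨hx, h2.symm⟩
  · rintro ⟨hy, rfl⟩
    exact ⟨(y, s), ⟨hy, rfl⟩, by rw [act_nn]⟩

lemma act_10_image_prod_A (B : Set Omega) (hBA : B ⊆ A) (s : ℤ) :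
    act (1,0) '' (B ×ˢ ({s} : Set ℤ)) = (shift '' B) ×ˢ ({s} : Set ℤ) := by
  ext ⟨y, t⟩
  simp only [Set.mem_image, Set.mem_prod, Set.mem_singleton_iff]
  constructor
  · rintro ⟨⟨x, u⟩, ⟨hx, hu⟩, h⟩
    rw [act_10] at h
    obtain ⟨h1, h2⟩ := Prod.mk.injEq .. ▸ h
    simp only at h1 h2
    subst h1; subst hu
    have : x (-1) = false := hBA hx
    constructor
    · exact ⟨x, hx, rfl⟩
    · rw [← h2]; simp [bval, this]
  · rintro ⟨⟨x, hx, rfl⟩, ht⟩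
    subst ht
    exact ⟨(x, t), ⟨hx, rfl⟩, by
      rw [act_10]
      simp [bval, (show x (-1) = false from hBA hx)]⟩

lemma act_10_image_prod_Ac (B : Set Omega) (hBA : B ⊆ Aᶜ) (s : ℤ) :
    act (1,0) '' (B ×ˢ ({s} : Set ℤ)) = (shift '' B) ×ˢ ({s + 1} : Set ℤ) := by
  ext ⟨y, t⟩
  simp only [Set.mem_image, Set.mem_prod, Set.mem_singleton_iff]
  constructor
  · rintro ⟨⟨x, u⟩, ⟨hx, hu⟩, h⟩
    rw [act_10] at h
    obtain ⟨h1, h2⟩ := Prod.mk.injEq .. ▸ h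
    simp only at h1 h2
    subst h1; subst hu
    have : x (-1) = true := by
      have := hBA hx
      simpa [A] using this
    constructor
    · exact ⟨x, hx, rfl⟩
    · rw [← h2]; simp [bval, this]
  · rintro ⟨⟨x, hx, rfl⟩, ht⟩
    subst ht
    have : x (-1) = true := by
      have := hBA hx
      simpa [A] using this
    exact ⟨(x, s), ⟨hx, rfl⟩, by rw [act_10]; simp [bval, this]⟩

lemma act_10_image_prod_univ (B : Set Omega) :
    act (1,0) '' (B ×ˢ (Set.univ : Set ℤ)) = (shift '' B) ×ˢ (Set.univ : Set ℤ) := by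
  ext ⟨y, t⟩
  simp only [Set.mem_image, Set.mem_prod, Set.mem_univ, and_true]
  constructor
  · rintro ⟨⟨x, u⟩, hx, h⟩
    rw [act_10] at h
    obtain ⟨h1, _⟩ := Prod.mk.injEq .. ▸ h
    simp only at h1
    subst h1
    exact ⟨x, hx, rfl⟩
  · rintro ⟨x, hx, rfl⟩
    exact ⟨(x, t - bval (x (-1))), hx, by rw [act_10]; simp⟩

lemma act_11_image_prod_univ (B : Set Omega) :
    act (1,1) '' (B ×ˢ (Set.univ : Set ℤ)) = B ×ˢ (Set.univ : Set ℤ) := by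
  ext ⟨y, t⟩
  simp only [Set.mem_image, Set.mem_prod, Set.mem_univ, and_true]
  constructor
  · rintro ⟨⟨x, u⟩, hx, h⟩
    rw [act_11] at h
    obtain ⟨h1, _⟩ := Prod.mk.injEq .. ▸ h
    simp only at h1
    subst h1
    exact hx
  · intro hy
    exact ⟨(y, t - 1), hy, by rw [act_11]; simp⟩

section Layer
variable {β θ : ℝ} {m : Measure Omega}

lemma disj_inter_diff (B : Set Omega) : Disjoint (B ∩ A) (B \ A) :=
  Disjoint.mono Set.inter_subset_right (Set.diff_subset_compl B A) disjoint_compl_right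

lemma conf_rhs (β θ : ℝ) (m : Measure Omega) {B : Set Omega} (hB : MeasurableSet B) :
    ∫⁻ x in B, ENNReal.ofReal (Real.exp (-β * chi θ x)) ∂m
      = ENNReal.ofReal (Real.exp (-β)) * m (B ∩ A)
        + ENNReal.ofReal (Real.exp (β * θ)) * m (B \ A) := by
  have hBsplit : B = (B ∩ A) ∪ (B \ A) := (Set.inter_union_diff B A).symm
  conv_lhs => rw [hBsplit]
  rw [lintegral_union (hB.diff measurableSet_A) (disj_inter_diff B)]
  have h1 : ∫⁻ x in B ∩ A, ENNReal.ofReal (Real.exp (-β * chi θ x)) ∂m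
      = ENNReal.ofReal (Real.exp (-β)) * m (B ∩ A) := by
    rw [setLIntegral_congr_fun (hB.inter measurableSet_A)
      (fun x hx => ?_), setLIntegral_const]
    rw [chi, if_pos (show x (-1) = false from hx.2), mul_one]
  have h2 : ∫⁻ x in B \ A, ENNReal.ofReal (Real.exp (-β * chi θ x)) ∂m
      = ENNReal.ofReal (Real.exp (β * θ)) * m (B \ A) := by
    rw [setLIntegral_congr_fun (hB.diff measurableSet_A)
      (fun x hx => ?_), setLIntegral_const]
    have : ¬ (x (-1) = false) := hx.2
    rw [chi, if_neg this]
    ring_nf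
  rw [h1, h2]

lemma conf_image_split (hm : IsConformal β θ m) {B : Set Omega} (hB : MeasurableSet B) :
    m (shift '' B)
      = ENNReal.ofReal (Real.exp (-β)) * m (B ∩ A)
        + ENNReal.ofReal (Real.exp (β * θ)) * m (B \ A) := by
  rw [hm B hB, conf_rhs β θ m hB]

lemma conf_image_of_subset_A (hm : IsConformal β θ m) {B : Set Omega}
    (hB : MeasurableSet B) (hBA : B ⊆ A) :
    m (shift '' B) = ENNReal.ofReal (Real.exp (-β)) * m B := by
  rw [conf_image_split hm hB, Set.inter_eq_self_of_subset_left hBA,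
    Set.diff_eq_empty.mpr hBA, measure_empty, mul_zero, add_zero]

lemma conf_image_of_subset_Ac (hm : IsConformal β θ m) {B : Set Omega}
    (hB : MeasurableSet B) (hBA : B ⊆ Aᶜ) :
    m (shift '' B) = ENNReal.ofReal (Real.exp (β * θ)) * m B := by
  have h1 : B ∩ A = ∅ := by
    rw [← Set.subset_empty_iff]
    intro x ⟨hx1, hx2⟩
    exact absurd hx2 (hBA hx1)
  have h2 : B \ A = B := by
    rw [Set.diff_eq, Set.inter_eq_self_of_subset_left hBA]
  rw [conf_image_split hm hB, h1, h2, measure_empty, mul_zero, zero_add]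

lemma tsum_cfac_eq_top (β θ : ℝ) : ∑' n : ℤ, cfac β θ n = ⊤ := by
  have key : ∀ g : ℕ → ℤ, Function.Injective g → (∀ k, (1:ℝ≥0∞) ≤ cfac β θ (g k)) →
      ∑' n : ℤ, cfac β θ n = ⊤ := by
    intro g hg hk
    refine top_unique ?_
    calc (⊤:ℝ≥0∞) = ∑' _ : ℕ, (1:ℝ≥0∞) :=
          (ENNReal.tsum_const_eq_top_of_ne_zero one_ne_zero).symm
      _ ≤ ∑' k : ℕ, cfac β θ (g k) := ENNReal.tsum_le_tsum hk
      _ ≤ ∑' n : ℤ, cfac β θ n := ENNReal.tsum_comp_le_tsum_of_injective hg _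
  rcases le_or_gt 0 (β * (1 + θ)) with h | h
  · refine key (fun k => -(k:ℤ)) (fun a b hab => by simpa using hab) (fun k => ?_)
    rw [cfac, ← ENNReal.ofReal_one]
    apply ENNReal.ofReal_le_ofReal
    apply Real.one_le_exp
    push_cast
    nlinarith
  · refine key (fun k => (k:ℤ)) (fun a b hab => by simpa using hab) (fun k => ?_)
    rw [cfac, ← ENNReal.ofReal_one]
    apply ENNReal.ofReal_le_ofReal
    apply Real.one_le_exp
    push_cast
    nlinarith

lemma mbar_prod_univ (β θ : ℝ) (m : Measure Omega) {B : Set Omega} (hB : MeasurableSet B) :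
    mbar β θ m (B ×ˢ (Set.univ : Set ℤ)) = (∑' n : ℤ, cfac β θ n) * m B := by
  rw [mbar_apply β θ m (hB.prod MeasurableSet.univ)]
  rw [← ENNReal.tsum_mul_right]
  refine tsum_congr (fun n => ?_)
  have : sec n (B ×ˢ (Set.univ : Set ℤ)) = B := by ext x; simp [sec]
  rw [this]

lemma mbar_prod_singleton (β θ : ℝ) (m : Measure Omega) {B : Set Omega}
    (hB : MeasurableSet B) (j : ℤ) :
    mbar β θ m (B ×ˢ ({j} : Set ℤ)) = cfac β θ j * m B := by
  rw [mbar_apply β θ m (hB.prod trivial)]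
  rw [tsum_eq_single j (fun n hn => ?_)]
  · congr 1
    have : sec j (B ×ˢ ({j} : Set ℤ)) = B := by
      ext x; simp [sec]
    rw [this]
  · have : sec n (B ×ˢ ({j} : Set ℤ)) = ∅ := by
      ext x; simp [sec, Ne.symm hn, hn]
    rw [this, measure_empty, mul_zero]

end Layer
section Layer2
variable {β θ : ℝ} {m : Measure Omega}

lemma cθ_add (θ : ℝ) (v w : ℤ × ℤ) : cθ θ (v + w) = cθ θ v + cθ θ w := by
  simp only [cθ, Prod.fst_add, Prod.snd_add]
  push_cast
  ring

lemma cθ_neg (θ : ℝ) (v : ℤ × ℤ) : cθ θ (-v) = -cθ θ v := by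
  simp only [cθ, Prod.fst_neg, Prod.snd_neg]
  push_cast
  ring

/-- conformality at v = (1,1) -/
lemma mbar_conf_11 (hm : IsConformal β θ m) {E : Set (Omega × ℤ)} (hE : MeasurableSet E) :
    mbar β θ m (act (1,1) '' E)
      = ENNReal.ofReal (Real.exp (-β * cθ θ (1,1))) * mbar β θ m E := by
  rw [mbar_apply β θ m (measurableSet_act_image hE (1,1)), mbar_apply β θ m hE]
  have h1 : ∀ n : ℤ, cfac β θ n * m (sec n (act (1,1) '' E))
      = cfac β θ n * m (sec (n-1) E) := fun n => by rw [sec_act11]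
  rw [tsum_congr h1]
  rw [← Equiv.tsum_eq (Equiv.addRight (1:ℤ)) (fun n => cfac β θ n * m (sec (n-1) E))]
  have h2 : ∀ n : ℤ, cfac β θ ((Equiv.addRight (1:ℤ)) n) * m (sec ((Equiv.addRight (1:ℤ)) n - 1) E)
      = ENNReal.ofReal (Real.exp (-β * cθ θ (1,1))) * (cfac β θ n * m (sec n E)) := by
    intro n
    have hn : ((Equiv.addRight (1:ℤ)) n : ℤ) = n + 1 := rfl
    rw [hn, add_sub_cancel_right, cfac_add_one, mul_assoc]
    congr 2
    simp [cθ]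
  rw [tsum_congr h2, ENNReal.tsum_mul_left]

/-- conformality at v = (1,0) -/
lemma mbar_conf_10 (hm : IsConformal β θ m) {E : Set (Omega × ℤ)} (hE : MeasurableSet E) :
    mbar β θ m (act (1,0) '' E)
      = ENNReal.ofReal (Real.exp (-β * cθ θ (1,0))) * mbar β θ m E := by
  set e1 := ENNReal.ofReal (Real.exp (-β)) with he1
  set e2 := ENNReal.ofReal (Real.exp (β * θ)) with he2
  rw [mbar_apply β θ m (measurableSet_act_image hE (1,0)), mbar_apply β θ m hE]
  have hsec : ∀ n : ℤ, m (sec n (act (1,0) '' E))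
      = e1 * m (sec n E ∩ A) + e2 * m (sec (n-1) E ∩ Aᶜ) := by
    intro n
    rw [sec_act10]
    rw [measure_union ?hd (measurableSet_shift_image
      ((measurableSet_sec hE (n-1)).inter measurableSet_A.compl))]
    case hd =>
      refine Set.disjoint_left.mpr ?_
      rintro y ⟨x, ⟨_, hxA⟩, rfl⟩ ⟨x', ⟨_, hxA'⟩, hx'⟩
      have : x' = x := by
        have := congrArg (fun f : Omega => unshift f) hx'
        simpa [unshift_shift] using this
      subst this
      exact hxA' hxA
    rw [conf_image_of_subset_A hm ((measurableSet_sec hE n).inter measurableSet_A)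
      Set.inter_subset_right]
    rw [conf_image_of_subset_Ac hm ((measurableSet_sec hE (n-1)).inter measurableSet_A.compl)
      Set.inter_subset_right]
  have key : ∀ n : ℤ, cfac β θ n * m (sec n (act (1,0) '' E))
      = e1 * (cfac β θ n * m (sec n E ∩ A)) + e2 * (cfac β θ n * m (sec (n-1) E ∩ Aᶜ)) := by
    intro n; rw [hsec n]; ring
  rw [tsum_congr key, ENNReal.tsum_add]
  have h2 : ∑' n : ℤ, e2 * (cfac β θ n * m (sec (n-1) E ∩ Aᶜ))
      = ∑' n : ℤ, e1 * (cfac β θ n * m (sec n E ∩ Aᶜ)) := by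
    rw [← Equiv.tsum_eq (Equiv.addRight (1:ℤ))
      (fun n => e2 * (cfac β θ n * m (sec (n-1) E ∩ Aᶜ)))]
    refine tsum_congr (fun n => ?_)
    have hn : ((Equiv.addRight (1:ℤ)) n : ℤ) = n + 1 := rfl
    rw [hn, add_sub_cancel_right, cfac_add_one]
    have hKe : e2 * ENNReal.ofReal (Real.exp (-β * (1 + θ))) = e1 := by
      rw [he1, he2, ofReal_exp_mul]
      congr 1
      ring
    calc e2 * (ENNReal.ofReal (Real.exp (-β * (1 + θ))) * cfac β θ n * m (sec n E ∩ Aᶜ))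
        = (e2 * ENNReal.ofReal (Real.exp (-β * (1 + θ)))) * (cfac β θ n * m (sec n E ∩ Aᶜ)) := by
          ring
      _ = e1 * (cfac β θ n * m (sec n E ∩ Aᶜ)) := by rw [hKe]
  rw [h2, ← ENNReal.tsum_add]
  have key2 : ∀ n : ℤ, e1 * (cfac β θ n * m (sec n E ∩ A)) + e1 * (cfac β θ n * m (sec n E ∩ Aᶜ))
      = e1 * (cfac β θ n * m (sec n E)) := by
    intro n
    have hmA : m (sec n E ∩ A) + m (sec n E ∩ Aᶜ) = m (sec n E) := by
      have := measure_inter_add_diff (μ := m) (sec n E) measurableSet_A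
      rwa [Set.diff_eq] at this
    calc e1 * (cfac β θ n * m (sec n E ∩ A)) + e1 * (cfac β θ n * m (sec n E ∩ Aᶜ))
        = e1 * (cfac β θ n * (m (sec n E ∩ A) + m (sec n E ∩ Aᶜ))) := by ring
      _ = e1 * (cfac β θ n * m (sec n E)) := by rw [hmA]
  rw [tsum_congr key2, ENNReal.tsum_mul_left]
  congr 2
  simp [cθ, he1]

lemma mbar_conformal (hm : IsConformal β θ m) : IsConformalZ2 β θ (mbar β θ m) := by
  have main : ∀ v : ℤ × ℤ, ∀ E : Set (Omega × ℤ), MeasurableSet E →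
      mbar β θ m (act v '' E) = ENNReal.ofReal (Real.exp (-β * cθ θ v)) * mbar β θ m E := by
    refine z2_induction _ ?_ ?_ ?_ ?_ ?_
    · intro E hE
      have hid : act (0 : ℤ × ℤ) '' E = E := by
        have : act (0 : ℤ × ℤ) = id := funext act_zero
        rw [this, Set.image_id]
      rw [hid]
      simp [cθ]
    · exact fun E hE => mbar_conf_10 hm hE
    · exact fun E hE => mbar_conf_11 hm hE
    · intro v w hv hw E hE
      have him : act (v + w) '' E = act v '' (act w '' E) := by
        rw [← Set.image_comp]
        refine Set.image_congr (fun z _ => ?_)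
        exact (act_add v w z)
      rw [him, hv _ (measurableSet_act_image hE w), hw _ hE, ← mul_assoc,
        ofReal_exp_mul]
      congr 2
      rw [cθ_add]
      ring
    · intro v hv E hE
      have hEv : MeasurableSet (act (-v) '' E) := measurableSet_act_image hE (-v)
      have h1 : act v '' (act (-v) '' E) = E := by
        rw [← Set.image_comp]
        have : act v ∘ act (-v) = id := funext (act_act_neg v)
        rw [this, Set.image_id]
      have h2 := hv _ hEv
      rw [h1] at h2
      have hcancel : ENNReal.ofReal (Real.exp (-β * cθ θ (-v)))
          * ENNReal.ofReal (Real.exp (-β * cθ θ v)) = 1 := by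
        rw [ofReal_exp_mul, cθ_neg]
        norm_num
      calc mbar β θ m (act (-v) '' E)
          = 1 * mbar β θ m (act (-v) '' E) := (one_mul _).symm
        _ = ENNReal.ofReal (Real.exp (-β * cθ θ (-v)))
            * (ENNReal.ofReal (Real.exp (-β * cθ θ v)) * mbar β θ m (act (-v) '' E)) := by
            rw [← mul_assoc, hcancel]
        _ = ENNReal.ofReal (Real.exp (-β * cθ θ (-v))) * mbar β θ m E := by rw [← h2]
  exact main

end Layer2
section Layer3
variable {β θ : ℝ} {m : Measure Omega} {μ : Measure (Omega × ℤ)}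

lemma mbar_section0 (β θ : ℝ) (m : Measure Omega) {B : Set Omega} (hB : MeasurableSet B) :
    mbar β θ m (B ×ˢ ({0} : Set ℤ)) = m B := by
  rw [mbar_prod_singleton β θ m hB 0, cfac_zero, one_mul]

lemma mbar_univ0 (β θ : ℝ) (m : Measure Omega) [IsProbabilityMeasure m] :
    mbar β θ m (Set.univ ×ˢ ({0} : Set ℤ)) = 1 := by
  rw [mbar_section0 β θ m MeasurableSet.univ, measure_univ]

lemma mbar_ne_zero (β θ : ℝ) (m : Measure Omega) [IsProbabilityMeasure m] :
    mbar β θ m ≠ 0 := by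
  intro h
  have h1 := mbar_univ0 β θ m
  rw [h] at h1
  simp at h1

lemma mbar_radon (β θ : ℝ) (m : Measure Omega) [IsProbabilityMeasure m] :
    IsRadon (mbar β θ m) := by
  intro K hK
  have hF : (Prod.snd '' K).Finite := (hK.image continuous_snd).finite_of_discrete
  have hsub : K ⊆ Set.univ ×ˢ (Prod.snd '' K) := fun z hz => ⟨trivial, ⟨z, hz, rfl⟩⟩
  refine lt_of_le_of_lt (measure_mono hsub) ?_
  rw [mbar_apply β θ m (MeasurableSet.univ.prod trivial)]
  classical
  rw [tsum_eq_sum (s := hF.toFinset) ?_]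
  · refine ENNReal.sum_lt_top.mpr (fun n _ => ?_)
    exact ENNReal.mul_lt_top ENNReal.ofReal_lt_top (measure_lt_top m _)
  · intro n hn
    have hsec : sec n (Set.univ ×ˢ (Prod.snd '' K)) = ∅ := by
      ext x
      simp only [sec, Set.mem_preimage, Set.mem_prod, Set.mem_univ, true_and,
        Set.mem_empty_iff_false, iff_false]
      intro hmem
      exact hn (hF.mem_toFinset.mpr hmem)
    rw [hsec, measure_empty, mul_zero]

lemma image_mk_prod (s : Set Omega) (n : ℤ) :
    (fun x => (x, n)) '' s = s ×ˢ ({n} : Set ℤ) := by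
  ext ⟨x, t⟩
  simp only [Set.mem_image, Set.mem_prod, Set.mem_singleton_iff]
  constructor
  · rintro ⟨y, hy, h⟩
    obtain ⟨h1, h2⟩ := Prod.mk.injEq .. ▸ h
    exact ⟨h1 ▸ hy, h2.symm⟩
  · rintro ⟨hx, rfl⟩
    exact ⟨x, hx, rfl⟩

lemma comap0_apply (μ : Measure (Omega × ℤ)) {s : Set Omega} (hs : MeasurableSet s) :
    Measure.comap (fun x => (x, (0:ℤ))) μ s = μ (s ×ˢ ({0} : Set ℤ)) := by
  rw [Measure.comap_apply _ (fun a b h => by simpa using congrArg Prod.fst h)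
    (fun t ht => by rw [image_mk_prod]; exact ht.prod trivial) μ hs, image_mk_prod]

lemma conf_prod_singleton (hμ : IsConformalZ2 β θ μ) {C : Set Omega}
    (hC : MeasurableSet C) (n : ℤ) :
    μ (C ×ˢ ({n} : Set ℤ)) = cfac β θ n * μ (C ×ˢ ({0} : Set ℤ)) := by
  have h := hμ (n, n) (C ×ˢ ({0} : Set ℤ)) (hC.prod trivial)
  rw [act_nn_image_prod, zero_add] at h
  rw [h]
  congr 1
  rw [cfac]
  congr 1
  simp only [cθ]
  push_cast
  ring

lemma disjoint_image_shift {s t : Set Omega} (h : Disjoint s t) :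
    Disjoint (shift '' s) (shift '' t) := by
  rw [shift_image_eq_preimage, shift_image_eq_preimage]
  exact Disjoint.preimage _ h

/-- the comap measure is conformal -/
lemma comap_conformal (hμ : IsConformalZ2 β θ μ) :
    IsConformal β θ (Measure.comap (fun x => (x, (0:ℤ))) μ) := by
  set m := Measure.comap (fun x => (x, (0:ℤ))) μ with hmdef
  intro B hB
  have hBA : MeasurableSet (B ∩ A) := hB.inter measurableSet_A
  have hBAc : MeasurableSet (B \ A) := hB.diff measurableSet_A
  -- left side
  have hsplit : shift '' B = (shift '' (B ∩ A)) ∪ (shift '' (B \ A)) := by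
    conv_lhs => rw [(Set.inter_union_diff B A).symm]
    exact Set.image_union _ _ _
  have hmeasL : m (shift '' B) = μ ((shift '' B) ×ˢ ({0} : Set ℤ)) :=
    comap0_apply μ (measurableSet_shift_image hB)
  have hprodsplit : (shift '' B) ×ˢ ({0} : Set ℤ)
      = ((shift '' (B ∩ A)) ×ˢ ({0} : Set ℤ)) ∪ ((shift '' (B \ A)) ×ˢ ({0} : Set ℤ)) := by
    rw [hsplit, Set.union_prod]
  have hdisj : Disjoint ((shift '' (B ∩ A)) ×ˢ ({0} : Set ℤ))
      ((shift '' (B \ A)) ×ˢ ({0} : Set ℤ)) := by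
    refine Set.disjoint_left.mpr ?_
    rintro ⟨y, t⟩ ⟨hy1, _⟩ ⟨hy2, _⟩
    exact Set.disjoint_left.mp (disjoint_image_shift (disj_inter_diff B)) hy1 hy2
  -- first piece
  have hA1 : μ ((shift '' (B ∩ A)) ×ˢ ({0} : Set ℤ))
      = ENNReal.ofReal (Real.exp (-β)) * m (B ∩ A) := by
    rw [← act_10_image_prod_A (B ∩ A) Set.inter_subset_right 0,
      hμ (1,0) _ (hBA.prod trivial), comap0_apply μ hBA]
    congr 2
    simp [cθ]
  -- second piece
  have hA2 : μ ((shift '' (B \ A)) ×ˢ ({0} : Set ℤ))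
      = ENNReal.ofReal (Real.exp (β * θ)) * m (B \ A) := by
    have hBAc' : B \ A ⊆ Aᶜ := Set.diff_subset_compl B A
    have hC : μ ((shift '' (B \ A)) ×ˢ ({(0:ℤ) + 1} : Set ℤ))
        = ENNReal.ofReal (Real.exp (-β)) * μ ((B \ A) ×ˢ ({0} : Set ℤ)) := by
      rw [← act_10_image_prod_Ac (B \ A) hBAc' 0, hμ (1,0) _ (hBAc.prod trivial)]
      congr 2
      simp [cθ]
    rw [(by norm_num : ((0:ℤ) + 1) = 1)] at hC
    have hC2 : μ ((shift '' (B \ A)) ×ˢ ({(1:ℤ)} : Set ℤ))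
        = cfac β θ 1 * μ ((shift '' (B \ A)) ×ˢ ({0} : Set ℤ)) :=
      conf_prod_singleton hμ (measurableSet_shift_image hBAc) 1
    have hKK : ENNReal.ofReal (Real.exp (β * (1 + θ))) * cfac β θ 1 = 1 := by
      rw [cfac, ofReal_exp_mul]
      norm_num
    have hfin : μ ((shift '' (B \ A)) ×ˢ ({0} : Set ℤ))
        = ENNReal.ofReal (Real.exp (β * (1 + θ)))
          * (ENNReal.ofReal (Real.exp (-β)) * μ ((B \ A) ×ˢ ({0} : Set ℤ))) := by
      calc μ ((shift '' (B \ A)) ×ˢ ({0} : Set ℤ))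
          = (ENNReal.ofReal (Real.exp (β * (1 + θ))) * cfac β θ 1)
            * μ ((shift '' (B \ A)) ×ˢ ({0} : Set ℤ)) := by rw [hKK, one_mul]
        _ = ENNReal.ofReal (Real.exp (β * (1 + θ)))
            * (cfac β θ 1 * μ ((shift '' (B \ A)) ×ˢ ({0} : Set ℤ))) := by ring
        _ = ENNReal.ofReal (Real.exp (β * (1 + θ)))
            * (ENNReal.ofReal (Real.exp (-β)) * μ ((B \ A) ×ˢ ({0} : Set ℤ))) := by
            rw [← hC2, hC]
    rw [hfin, ← mul_assoc, ofReal_exp_mul, comap0_apply μ hBAc]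
    congr 2
    ring
  rw [conf_rhs β θ m hB, hmeasL, hprodsplit,
    measure_union hdisj ((measurableSet_shift_image hBAc).prod trivial), hA1, hA2]

/-- decomposition of a measurable set over levels -/
lemma measure_eq_tsum_sec (μ : Measure (Omega × ℤ)) {E : Set (Omega × ℤ)}
    (hE : MeasurableSet E) :
    μ E = ∑' n : ℤ, μ ((sec n E) ×ˢ ({n} : Set ℤ)) := by
  have hdec : E = ⋃ n : ℤ, (sec n E) ×ˢ ({n} : Set ℤ) := by
    ext ⟨x, t⟩
    simp only [Set.mem_iUnion, Set.mem_prod, Set.mem_singleton_iff, sec, Set.mem_preimage]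
    constructor
    · intro h
      exact ⟨t, h, rfl⟩
    · rintro ⟨n, h, rfl⟩
      exact h
  conv_lhs => rw [hdec]
  refine measure_iUnion ?_ (fun n => (measurableSet_sec hE n).prod trivial)
  intro i j hij
  refine Set.disjoint_left.mpr ?_
  rintro ⟨x, t⟩ ⟨_, (h1 : t = i)⟩ ⟨_, (h2 : t = j)⟩
  exact hij (h1 ▸ h2 ▸ rfl)

lemma mbar_comap_eq (hμ : IsConformalZ2 β θ μ) :
    mbar β θ (Measure.comap (fun x => (x, (0:ℤ))) μ) = μ := by
  ext E hE
  rw [mbar_apply β θ _ hE, measure_eq_tsum_sec μ hE]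
  refine tsum_congr (fun n => ?_)
  rw [conf_prod_singleton hμ (measurableSet_sec hE n) n, comap0_apply μ (measurableSet_sec hE n)]

/-- ergodicity: forward -/
lemma erg_forward (herg : ErgodicShift m) : ErgodicZ2 (mbar β θ m) := by
  intro E hE hInv
  set B := sec 0 E with hBdef
  have hstep : ∀ z : Omega × ℤ, z ∈ E ↔ (z.1, z.2 + 1) ∈ E := by
    intro z
    constructor
    · intro hz
      rw [← hInv (1,1)]
      exact ⟨z, hz, act_11 z⟩
    · intro hz
      rw [← hInv (1,1)] at hz
      obtain ⟨w, hw, hww⟩ := hz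
      rw [act_11] at hww
      obtain ⟨h1, h2⟩ := Prod.mk.injEq .. ▸ hww
      have : w = z := Prod.ext h1 (by omega)
      rwa [this] at hw
  have hlevel : ∀ (x : Omega) (t : ℤ), ((x, t) ∈ E ↔ (x, 0) ∈ E) := by
    intro x t
    induction t using Int.induction_on with
    | zero => exact Iff.rfl
    | succ n ih => exact (hstep (x, (n:ℤ))).symm.trans ih
    | pred n ih =>
        have h := hstep (x, (-(n:ℤ) - 1))
        have harith : (-(n:ℤ) - 1) + 1 = -(n:ℤ) := by ring
        rw [harith] at h
        exact h.trans ih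
  have hEB : E = B ×ˢ (Set.univ : Set ℤ) := by
    ext ⟨x, t⟩
    simp only [Set.mem_prod, Set.mem_univ, and_true, hBdef, sec, Set.mem_preimage]
    exact hlevel x t
  have hBmeas : MeasurableSet B := measurableSet_sec hE 0
  have hBshift : shift '' B = B := by
    have h10 := hInv (1,0)
    rw [hEB, act_10_image_prod_univ] at h10
    ext x
    have := Set.ext_iff.mp h10 (x, 0)
    simpa using this
  have hBinv : shift ⁻¹' B = B := by
    conv_lhs => rw [← hBshift]
    exact Set.preimage_image_eq B shift_bijective.1
  rcases herg B hBmeas hBinv with h | h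
  · left
    rw [hEB, mbar_prod_univ β θ m hBmeas, h, mul_zero]
  · right
    have hEc : Eᶜ = Bᶜ ×ˢ (Set.univ : Set ℤ) := by
      rw [hEB]
      ext ⟨x, t⟩
      simp
    rw [hEc, mbar_prod_univ β θ m hBmeas.compl, h, mul_zero]

/-- ergodicity: backward -/
lemma erg_backward (herg : ErgodicZ2 (mbar β θ m)) : ErgodicShift m := by
  intro B hB hBinv
  have hBshift : shift '' B = B := by
    have h := Set.image_preimage_eq B shift_bijective.2
    rw [hBinv] at h
    exact h
  have hinv : ∀ v : ℤ × ℤ, act v '' (B ×ˢ (Set.univ : Set ℤ)) = B ×ˢ (Set.univ : Set ℤ) := by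
    refine z2_induction _ ?_ ?_ ?_ ?_ ?_
    · have : act (0 : ℤ × ℤ) = id := funext act_zero
      rw [this, Set.image_id]
    · rw [act_10_image_prod_univ, hBshift]
    · exact act_11_image_prod_univ B
    · intro v w hv hw
      have him : act (v + w) '' (B ×ˢ (Set.univ : Set ℤ))
          = act v '' (act w '' (B ×ˢ (Set.univ : Set ℤ))) := by
        rw [← Set.image_comp]
        exact Set.image_congr (fun z _ => act_add v w z)
      rw [him, hw, hv]
    · intro v hv
      have : act (-v) '' (B ×ˢ (Set.univ : Set ℤ))
          = act (-v) '' (act v '' (B ×ˢ (Set.univ : Set ℤ))) := by rw [hv]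
      rw [this, ← Set.image_comp]
      have hid : act (-v) ∘ act v = id := funext (act_neg_act v)
      rw [hid, Set.image_id]
  rcases herg (B ×ˢ (Set.univ : Set ℤ)) (hB.prod MeasurableSet.univ) hinv with h | h
  · left
    rw [mbar_prod_univ β θ m hB, tsum_cfac_eq_top] at h
    rcases mul_eq_zero.mp h with h' | h'
    · exact absurd h' (by simp)
    · exact h'
  · right
    have hEc : (B ×ˢ (Set.univ : Set ℤ))ᶜ = Bᶜ ×ˢ (Set.univ : Set ℤ) := by
      ext ⟨x, t⟩
      simp
    rw [hEc, mbar_prod_univ β θ m hB.compl, tsum_cfac_eq_top] at h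
    rcases mul_eq_zero.mp h with h' | h'
    · exact absurd h' (by simp)
    · exact h'

end Layer3
theorem stmt3 (β θ : ℝ) (hθ : 0 < θ) :
    Set.BijOn (fun m : Measure Omega => mbar β θ m)
      {m | IsProbabilityMeasure m ∧ IsConformal β θ m}
      {μ | μ ≠ 0 ∧ IsRadon μ ∧ IsConformalZ2 β θ μ ∧
        μ (Set.univ ×ˢ ({0} : Set ℤ)) = 1} ∧
    (∀ m : Measure Omega, IsProbabilityMeasure m → IsConformal β θ m →
      (ErgodicShift m ↔ ErgodicZ2 (mbar β θ m))) := by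
  constructor
  · refine ⟨?_, ?_, ?_⟩
    · rintro m ⟨hprob, hconf⟩
      haveI := hprob
      exact ⟨mbar_ne_zero β θ m, mbar_radon β θ m, mbar_conformal hconf, mbar_univ0 β θ m⟩
    · rintro m1 ⟨h1p, _⟩ m2 ⟨h2p, _⟩ heq
      ext B hB
      have e1 := mbar_section0 β θ m1 hB
      have e2 := mbar_section0 β θ m2 hB
      rw [← e1, ← e2]
      simp only at heq
      rw [heq]
    · rintro μ ⟨hne, hradon, hconf, h1⟩
      refine ⟨Measure.comap (fun x => (x, (0:ℤ))) μ, ⟨?_, comap_conformal hconf⟩,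
        mbar_comap_eq hconf⟩
      constructor
      rw [comap0_apply μ MeasurableSet.univ]
      exact h1
  · intro m hprob hconf
    exact ⟨fun h => erg_forward h, fun h => erg_backward h⟩

end Stmt3
end

section
/- Let G be a countable discrete abelian group, P ⊆ G a subsemigroup with 0 ∈ P, P - P = G, and order unit a₀ ∈ P. Then: (i) for every a ∈ P, the closure of X_u \ (X_u + a) in {0,1}^G is compact and contained in Y_u; (ii) for every compact subset K ⊆ X_u there exists a ∈ P (indeed a = n·a₀ for some n ≥ 1) such that K ⊆ X_u \ (X_u + a). -/
/-!
STATEMENT 5. Let G be a countable discrete abelian group, P ⊆ G a subsemigroup with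
0 ∈ P, P - P = G, and order unit a₀ ∈ P. Then: (i) for every a ∈ P the closure of
X_u \ (X_u + a) in {0,1}^G is compact and contained in Y_u; (ii) for every compact
K ⊆ X_u there is n ≥ 1 with K ⊆ X_u \ (X_u + n·a₀).
-/

open MeasureTheory Real Set

namespace Stmt5

variable {G : Type}

/-- Translation "A + s" of a subset of G, encoded as a Bool-valued function. -/
def transl [AddCommGroup G] (s : G) (A : G → Bool) : G → Bool := fun g => A (g - s)

/-- Ȳ_u = {A ⊆ G : A ≠ ∅, -P + A ⊆ A}. -/
def Ybar [AddCommGroup G] (P : Set G) : Set (G → Bool) :=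
  {A | (∃ g, A g = true) ∧ ∀ g : G, ∀ p ∈ P, A g = true → A (g - p) = true}

/-- The point corresponding to A = G. -/
def allG (G : Type) : G → Bool := fun _ => true

/-- Y_u = Ȳ_u \ {G}. -/
def Yu [AddCommGroup G] (P : Set G) : Set (G → Bool) :=
  {A ∈ Ybar P | A ≠ allG G}

/-- X_u = {A ∈ Y_u : 0 ∈ A}. -/
def Xu [AddCommGroup G] (P : Set G) : Set (G → Bool) :=
  {A ∈ Yu P | A 0 = true}

/-- X_u + a. -/
def XuAdd [AddCommGroup G] (P : Set G) (a : G) : Set (G → Bool) :=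
  transl a '' Xu P

section Aux

variable {G : Type} [AddCommGroup G]

/-- For A ∈ Xu, membership in XuAdd a is equivalent to A a = true. -/
lemma mem_XuAdd_iff (P : Set G) (a : G) (A : G → Bool) (hA : A ∈ Xu P) :
    A ∈ XuAdd P a ↔ A a = true := by
  constructor
  · rintro ⟨B, hB, rfl⟩
    have : transl a B a = B 0 := by simp [transl]
    rw [this]
    exact hB.2
  · intro ha
    refine ⟨fun g => A (g + a), ?_, ?_⟩
    · refine ⟨⟨⟨⟨0, by simpa using ha⟩, ?_⟩, ?_⟩, by simpa using ha⟩
      · intro g p hp hg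
        have := hA.1.1.2 (g + a) p hp hg
        have heq : g + a - p = g - p + a := by abel
        rwa [heq] at this
      · intro hcontra
        apply hA.1.2
        funext g
        have : (fun g => A (g + a)) (g - a) = true := by rw [hcontra]; rfl
        simpa [allG] using this
    · funext g
      simp [transl]

lemma nsmul_mem (P : Set G) (hP0 : (0 : G) ∈ P)
    (hPadd : ∀ a ∈ P, ∀ b ∈ P, a + b ∈ P) (a₀ : G) (ha₀ : a₀ ∈ P) :
    ∀ n : ℕ, n • a₀ ∈ P := by
  intro n
  induction n with
  | zero => simpa using hP0
  | succ k ih =>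
    have : (k + 1) • a₀ = k • a₀ + a₀ := by rw [succ_nsmul]
    rw [this]
    exact hPadd _ ih _ ha₀

/-- The hereditary condition is a closed set. -/
lemma her_isClosed (P : Set G) :
    IsClosed {A : G → Bool | ∀ g : G, ∀ p ∈ P, A g = true → A (g - p) = true} := by
  have heq : {A : G → Bool | ∀ g : G, ∀ p ∈ P, A g = true → A (g - p) = true}
      = ⋂ g : G, ⋂ p ∈ P, {A : G → Bool | A g = false} ∪ {A | A (g - p) = true} := by
    ext A
    simp only [Set.mem_setOf_eq, Set.mem_iInter, Set.mem_union]
    constructor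
    · intro h g p hp
      by_cases hg : A g = true
      · exact Or.inr (h g p hp hg)
      · exact Or.inl (by simpa using hg)
    · intro h g p hp hg
      rcases h g p hp with h' | h'
      · rw [hg] at h'; exact absurd h' (by simp)
      · exact h'
  rw [heq]
  refine isClosed_iInter fun g => isClosed_iInter fun p => isClosed_iInter fun _ => ?_
  exact (isClosed_eq (continuous_apply g) continuous_const).union
    (isClosed_eq (continuous_apply (g - p)) continuous_const)

end Aux

theorem stmt5 (G : Type) [AddCommGroup G] [Countable G]
    (P : Set G) (hP0 : (0 : G) ∈ P) (hPadd : ∀ a ∈ P, ∀ b ∈ P, a + b ∈ P)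
    (hPgen : ∀ g : G, ∃ a ∈ P, ∃ b ∈ P, g = a - b)
    (a₀ : G) (ha₀ : a₀ ∈ P) (hunit : ∀ s : G, ∃ n : ℕ, n • a₀ - s ∈ P) :
    (∀ a ∈ P, IsCompact (closure (Xu P \ XuAdd P a)) ∧
      closure (Xu P \ XuAdd P a) ⊆ Yu P) ∧
    (∀ K : Set (G → Bool), IsCompact K → K ⊆ Xu P →
      ∃ n : ℕ, 1 ≤ n ∧ K ⊆ Xu P \ XuAdd P (n • a₀)) := by
  constructor
  · intro a haP
    refine ⟨IsClosed.isCompact isClosed_closure, ?_⟩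
    set C := ({A : G → Bool | A 0 = true} ∩ {A | A a = false}) ∩
      {A : G → Bool | ∀ g : G, ∀ p ∈ P, A g = true → A (g - p) = true} with hC
    have hCclosed : IsClosed C :=
      (((isClosed_eq (continuous_apply 0) continuous_const).inter
        (isClosed_eq (continuous_apply a) continuous_const)).inter (her_isClosed P))
    have hsub : Xu P \ XuAdd P a ⊆ C := by
      rintro A ⟨hA, hnA⟩
      refine ⟨⟨hA.2, ?_⟩, hA.1.1.2⟩
      by_contra h
      have : A a = true := by simpa using h
      exact hnA ((mem_XuAdd_iff P a A hA).2 this)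
    have hCY : C ⊆ Yu P := by
      rintro A ⟨⟨h0, haf⟩, hher⟩
      refine ⟨⟨⟨0, h0⟩, hher⟩, ?_⟩
      intro hcon
      rw [hcon] at haf
      simp [allG] at haf
    exact (closure_minimal hsub hCclosed).trans hCY
  · intro K hK hKX
    have hmem : ∀ n : ℕ, n • a₀ ∈ P := nsmul_mem P hP0 hPadd a₀ ha₀
    have hmono : ∀ A ∈ Xu P, ∀ m n : ℕ, m ≤ n → A (m • a₀) = false → A (n • a₀) = false := by
      intro A hA m n hmn hm
      by_contra h
      have hn : A (n • a₀) = true := by simpa using h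
      have hstep := hA.1.1.2 (n • a₀) ((n - m) • a₀) (hmem _) hn
      have heq : n • a₀ - (n - m) • a₀ = m • a₀ := by
        rw [sub_eq_iff_eq_add, ← add_nsmul, Nat.add_sub_cancel' hmn]
      rw [heq, hm] at hstep
      simp at hstep
    have hex : ∀ A ∈ Xu P, ∃ n : ℕ, A (n • a₀) = false := by
      intro A hA
      have hne : ∃ s, A s = false := by
        by_contra h
        push_neg at h
        apply hA.1.2
        funext g
        have hg := h g
        simp only [allG]
        simpa using hg
      obtain ⟨s, hs⟩ := hne
      obtain ⟨n, hn⟩ := hunit s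
      refine ⟨n, ?_⟩
      by_contra h
      have ht : A (n • a₀) = true := by simpa using h
      have hher := hA.1.1.2 (n • a₀) (n • a₀ - s) hn ht
      rw [sub_sub_cancel, hs] at hher
      simp at hher
    have hopen : ∀ n : ℕ, IsOpen {A : G → Bool | A (n • a₀) = false} := by
      intro n
      have heq : {A : G → Bool | A (n • a₀) = false}
          = (fun A : G → Bool => A (n • a₀)) ⁻¹' {false} := rfl
      rw [heq]
      exact (isOpen_discrete _).preimage (continuous_apply _)
    have hcov : K ⊆ ⋃ n : ℕ, {A : G → Bool | A (n • a₀) = false} := by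
      intro A hA
      obtain ⟨n, hn⟩ := hex A (hKX hA)
      exact Set.mem_iUnion.2 ⟨n, hn⟩
    obtain ⟨t, ht⟩ := hK.elim_finite_subcover _ hopen hcov
    refine ⟨t.sup id + 1, Nat.le_add_left 1 _, ?_⟩
    intro A hAK
    have hAX := hKX hAK
    have hfalse : A ((t.sup id + 1) • a₀) = false := by
      obtain ⟨n, hn, hAn⟩ := Set.mem_iUnion₂.1 (ht hAK)
      exact hmono A hAX n _ (Nat.le_succ_of_le (Finset.le_sup (f := id) hn)) hAn
    refine ⟨hAX, ?_⟩
    intro hmem'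
    have htrue := (mem_XuAdd_iff P _ A hAX).1 hmem'
    rw [hfalse] at htrue
    simp at htrue


end Stmt5
end

section
/- Let G be a countable discrete abelian group, P ⊆ G a subsemigroup with 0 ∈ P, P - P = G, and order unit a₀ ∈ P. Then the decreasing intersection ⋂_{n ≥ 1} (X̄_u + n·a₀) equals the singleton {G}. Consequently ⋂_{n ≥ 1} (X_u + n·a₀) = ∅. -/
/-!
STATEMENT 6. Let G be a countable discrete abelian group, P ⊆ G a subsemigroup with
0 ∈ P, P - P = G, and order unit a₀ ∈ P. Then ⋂_{n ≥ 1} (X̄_u + n·a₀) = {G}, and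
consequently ⋂_{n ≥ 1} (X_u + n·a₀) = ∅.
-/

open MeasureTheory Real Set

namespace Stmt6

variable {G : Type}

/-- Translation "A + s" of a subset of G, encoded as a Bool-valued function. -/
def transl [AddCommGroup G] (s : G) (A : G → Bool) : G → Bool := fun g => A (g - s)

/-- Ȳ_u = {A ⊆ G : A ≠ ∅, -P + A ⊆ A}. -/
def Ybar [AddCommGroup G] (P : Set G) : Set (G → Bool) :=
  {A | (∃ g, A g = true) ∧ ∀ g : G, ∀ p ∈ P, A g = true → A (g - p) = true}

/-- The point corresponding to A = G. -/
def allG (G : Type) : G → Bool := fun _ => true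

/-- X̄_u = {A ∈ Ȳ_u : 0 ∈ A}. -/
def Xbar [AddCommGroup G] (P : Set G) : Set (G → Bool) :=
  {A ∈ Ybar P | A 0 = true}

/-- Y_u = Ȳ_u \ {G}. -/
def Yu [AddCommGroup G] (P : Set G) : Set (G → Bool) :=
  {A ∈ Ybar P | A ≠ allG G}

/-- X_u = {A ∈ Y_u : 0 ∈ A}. -/
def Xu [AddCommGroup G] (P : Set G) : Set (G → Bool) :=
  {A ∈ Yu P | A 0 = true}

theorem stmt6 (G : Type) [AddCommGroup G] [Countable G]
    (P : Set G) (hP0 : (0 : G) ∈ P) (hPadd : ∀ a ∈ P, ∀ b ∈ P, a + b ∈ P)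
    (hPgen : ∀ g : G, ∃ a ∈ P, ∃ b ∈ P, g = a - b)
    (a₀ : G) (ha₀ : a₀ ∈ P) (hunit : ∀ s : G, ∃ n : ℕ, n • a₀ - s ∈ P) :
    (⋂ (n : ℕ) (_ : 1 ≤ n), transl (n • a₀) '' Xbar P) = {allG G} ∧
    (⋂ (n : ℕ) (_ : 1 ≤ n), transl (n • a₀) '' Xu P) = (∅ : Set (G → Bool)) := by
  have hAllXbar : allG G ∈ Xbar P := ⟨⟨⟨0, rfl⟩, fun g p hp h => rfl⟩, rfl⟩
  have hInter : (⋂ (n : ℕ) (_ : 1 ≤ n), transl (n • a₀) '' Xbar P) = {allG G} := by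
    ext B
    simp only [Set.mem_iInter, Set.mem_singleton_iff]
    constructor
    · intro hB
      have hmem : ∀ n : ℕ, 1 ≤ n → B ((n : ℕ) • a₀) = true := by
        intro n hn
        obtain ⟨A, hA, hBA⟩ := hB n hn
        rw [← hBA]
        simpa [transl] using hA.2
      have hinv : ∀ g : G, ∀ p ∈ P, B g = true → B (g - p) = true := by
        intro g p hp hg
        obtain ⟨A, hA, hBA⟩ := hB 1 le_rfl
        subst hBA
        simp only [transl] at hg ⊢
        have := hA.1.2 (g - 1 • a₀) p hp hg
        convert this using 2
        abel
      funext g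
      obtain ⟨n, hn⟩ := hunit g
      have h1 : ((n+1 : ℕ) • a₀) - g ∈ P := by
        have he : ((n+1 : ℕ) • a₀) - g = a₀ + (n • a₀ - g) := by
          rw [add_nsmul, one_nsmul]; abel
        rw [he]; exact hPadd a₀ ha₀ _ hn
      have hB1 := hmem (n+1) (Nat.le_add_left 1 n)
      have hfin := hinv _ _ h1 hB1
      have heq : (n+1 : ℕ) • a₀ - ((n+1 : ℕ) • a₀ - g) = g := by abel
      rw [heq] at hfin
      exact hfin
    · intro hB n hn
      subst hB
      exact ⟨allG G, hAllXbar, rfl⟩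
  refine ⟨hInter, ?_⟩
  ext B
  simp only [Set.mem_iInter, Set.mem_empty_iff_false, iff_false]
  intro hB
  have hB' : B = allG G := by
    rw [← Set.mem_singleton_iff, ← hInter]
    simp only [Set.mem_iInter]
    intro n hn
    obtain ⟨A, hA, hBA⟩ := hB n hn
    exact ⟨A, ⟨hA.1.1, hA.2⟩, hBA⟩
  obtain ⟨A, hA, hBA⟩ := hB 1 le_rfl
  apply hA.1.2
  funext g
  have h2 : transl ((1:ℕ) • a₀) A (g + (1:ℕ) • a₀) = allG G (g + (1:ℕ) • a₀) := by
    rw [hBA, hB']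
  simpa [transl, allG] using h2

end Stmt6
end

section
/- Let β ∈ ℝ and let μ be an e^{-βc}-conformal nonzero Radon measure on Y_u. Then 0 < μ(X_u \ (X_u + a₀)) < ∞. Consequently, there exist a unique e^{-βc}-conformal Radon measure ν on Y_u with ν(X_u \ (X_u + a₀)) = 1 and a unique real number r > 0 such that μ = r·ν. -/
/-!
STATEMENT 7. Let β ∈ ℝ and let μ be an e^{-βc}-conformal nonzero Radon measure on Y_u.
Then 0 < μ(X_u \ (X_u + a₀)) < ∞, and there exist a unique e^{-βc}-conformal Radon
measure ν on Y_u with ν(X_u \ (X_u + a₀)) = 1 and a unique r > 0 with μ = r·ν.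

(Measures "on Y_u" are encoded as Borel measures on the ambient compact space
{0,1}^G that vanish on the complement of Y_u and are finite on compact subsets of Y_u.)
-/

open MeasureTheory Real Set

namespace Stmt7

variable {G : Type}

def transl [AddCommGroup G] (s : G) (A : G → Bool) : G → Bool := fun g => A (g - s)

def Ybar [AddCommGroup G] (P : Set G) : Set (G → Bool) :=
  {A | (∃ g, A g = true) ∧ ∀ g : G, ∀ p ∈ P, A g = true → A (g - p) = true}

def allG (G : Type) : G → Bool := fun _ => true

def Yu [AddCommGroup G] (P : Set G) : Set (G → Bool) := {A ∈ Ybar P | A ≠ allG G}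

def Xu [AddCommGroup G] (P : Set G) : Set (G → Bool) := {A ∈ Yu P | A 0 = true}

def XuAdd [AddCommGroup G] (P : Set G) (a : G) : Set (G → Bool) := transl a '' Xu P

/-- μ lives on Y_u. -/
def ConcYu [AddCommGroup G] (P : Set G) (μ : Measure (G → Bool)) : Prop :=
  μ ((Yu P)ᶜ) = 0

/-- μ is Radon as a measure on Y_u : finite on compact subsets of Y_u. -/
def IsRadonYu [AddCommGroup G] (P : Set G) (μ : Measure (G → Bool)) : Prop :=
  ∀ K : Set (G → Bool), IsCompact K → K ⊆ Yu P → μ K < ⊤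

/-- μ is e^{-βc}-conformal : μ(E + s) = e^{-βc(s)} μ(E). -/
def IsConformal [AddCommGroup G] (c : G → ℝ) (β : ℝ) (μ : Measure (G → Bool)) : Prop :=
  ∀ s : G, ∀ E : Set (G → Bool), MeasurableSet E →
    μ (transl s '' E) = ENNReal.ofReal (Real.exp (-(β * c s))) * μ E

set_option linter.unusedSectionVars false

section Aux
variable [AddCommGroup G] [Countable G]

lemma transl_transl (s t : G) (A : G → Bool) : transl s (transl t A) = transl (s + t) A := by
  funext g; simp [transl, sub_sub]

lemma transl_zero (A : G → Bool) : transl (0 : G) A = A := by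
  funext g; simp [transl]

lemma transl_mem_Ybar {P : Set G} (s : G) {A : G → Bool} (hA : A ∈ Ybar P) :
    transl s A ∈ Ybar P := by
  obtain ⟨⟨g, hg⟩, hcl⟩ := hA
  refine ⟨⟨g + s, by simpa [transl] using hg⟩, ?_⟩
  intro g p hp h
  have : A (g - s - p) = true := hcl (g - s) p hp h
  simpa [transl, sub_right_comm] using this

lemma transl_mem_Yu {P : Set G} (s : G) {A : G → Bool} (hA : A ∈ Yu P) :
    transl s A ∈ Yu P := by
  refine ⟨transl_mem_Ybar s hA.1, ?_⟩
  intro h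
  apply hA.2
  funext g
  have := congrFun h (g + s)
  simpa [transl, allG] using this

lemma mem_XuAdd_iff {P : Set G} {a : G} {A : G → Bool} :
    A ∈ XuAdd P a ↔ A ∈ Yu P ∧ A a = true := by
  constructor
  · rintro ⟨C, hC, rfl⟩
    refine ⟨transl_mem_Yu a hC.1, ?_⟩
    simpa [transl] using hC.2
  · rintro ⟨hA, ha⟩
    refine ⟨transl (-a) A, ⟨transl_mem_Yu (-a) hA, ?_⟩, ?_⟩
    · simpa [transl] using ha
    · rw [transl_transl]; simp [transl_zero]

lemma D_eq (P : Set G) (a₀ : G) :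
    Xu P \ XuAdd P a₀ =
      {A : G → Bool | ∀ g : G, ∀ p ∈ P, A g = true → A (g - p) = true} ∩
      {A : G → Bool | A 0 = true} ∩ {A : G → Bool | A a₀ = false} := by
  ext A
  simp only [mem_diff, mem_inter_iff, mem_setOf_eq]
  constructor
  · rintro ⟨⟨hYu, h0⟩, hnot⟩
    refine ⟨⟨hYu.1.2, h0⟩, ?_⟩
    cases ha : A a₀ with
    | false => rfl
    | true => exact absurd (mem_XuAdd_iff.2 ⟨hYu, ha⟩) hnot
  · rintro ⟨⟨hcl, h0⟩, ha⟩
    have hYu : A ∈ Yu P := by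
      refine ⟨⟨⟨0, h0⟩, hcl⟩, ?_⟩
      intro h
      have := congrFun h a₀
      rw [ha] at this
      simp [allG] at this
    refine ⟨⟨hYu, h0⟩, ?_⟩
    intro h
    have := (mem_XuAdd_iff.1 h).2
    rw [ha] at this
    exact Bool.false_ne_true this

lemma isClopen_eval (g : G) (b : Bool) : IsClopen {A : G → Bool | A g = b} :=
  (isClopen_discrete {b}).preimage (continuous_apply g)

lemma measurableSet_eval (g : G) (b : Bool) : MeasurableSet {A : G → Bool | A g = b} := by
  have : {A : G → Bool | A g = b} = (fun A : G → Bool => A g) ⁻¹' {b} := rfl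
  rw [this]; exact measurable_pi_apply g (measurableSet_singleton b)

lemma closure_set_eq (P : Set G) :
    {A : G → Bool | ∀ g : G, ∀ p ∈ P, A g = true → A (g - p) = true} =
      ⋂ g : G, ⋂ p : G, ⋂ (_ : p ∈ P),
        ({A : G → Bool | A g = true}ᶜ ∪ {A : G → Bool | A (g - p) = true}) := by
  ext A
  simp only [mem_setOf_eq, mem_iInter, mem_union, mem_compl_iff]
  constructor
  · intro h g p hp
    rcases ha : A g with _ | _
    · left; simp [ha]
    · right; exact h g p hp ha
  · intro h g p hp ha
    rcases h g p hp with h' | h'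
    · exact absurd ha h'
    · exact h'

lemma isClosed_D (P : Set G) (a₀ : G) : IsClosed (Xu P \ XuAdd P a₀) := by
  rw [D_eq, closure_set_eq]
  refine IsClosed.inter (IsClosed.inter ?_ (isClopen_eval 0 true).isClosed)
    (isClopen_eval a₀ false).isClosed
  refine isClosed_iInter fun g => isClosed_iInter fun p => isClosed_iInter fun _ => ?_
  exact ((isClopen_eval g true).compl.union (isClopen_eval (g - p) true)).isClosed

lemma measurableSet_D (P : Set G) (a₀ : G) : MeasurableSet (Xu P \ XuAdd P a₀) := by
  rw [D_eq, closure_set_eq]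
  refine MeasurableSet.inter (MeasurableSet.inter ?_ (measurableSet_eval 0 true))
    (measurableSet_eval a₀ false)
  refine MeasurableSet.iInter fun g => MeasurableSet.iInter fun p =>
    MeasurableSet.iInter fun _ => ?_
  exact ((measurableSet_eval g true).compl.union (measurableSet_eval (g - p) true))

lemma nsmul_mem {P : Set G} (hP0 : (0 : G) ∈ P) (hPadd : ∀ a ∈ P, ∀ b ∈ P, a + b ∈ P)
    {a₀ : G} (ha₀ : a₀ ∈ P) : ∀ n : ℕ, n • a₀ ∈ P := by
  intro n
  induction n with
  | zero => simpa using hP0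
  | succ k ih => rw [succ_nsmul]; exact hPadd _ ih _ ha₀

lemma cover (P : Set G) (hP0 : (0 : G) ∈ P) (hPadd : ∀ a ∈ P, ∀ b ∈ P, a + b ∈ P)
    (a₀ : G) (ha₀ : a₀ ∈ P) (hunit : ∀ s : G, ∃ n : ℕ, n • a₀ - s ∈ P) :
    Yu P ⊆ ⋃ n : ℤ, transl (n • a₀) '' (Xu P \ XuAdd P a₀) := by
  intro A hA
  set f : ℤ → Bool := fun n => A (n • a₀) with hf
  have mono : ∀ m n : ℤ, m ≤ n → f n = true → f m = true := by
    intro m n hmn hn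
    have hp : (n - m).toNat • a₀ ∈ P := nsmul_mem hP0 hPadd ha₀ _
    have he : n • a₀ - ((n - m).toNat • a₀) = m • a₀ := by
      have h1 : (n - m).toNat • a₀ = (n - m) • a₀ := by
        rw [← natCast_zsmul, Int.toNat_of_nonneg (by omega : (0:ℤ) ≤ n - m)]
      rw [h1, sub_zsmul]; abel
    have := hA.1.2 (n • a₀) _ hp hn
    rwa [he] at this
  have h_true : ∃ n : ℤ, f n = true := by
    obtain ⟨g, hg⟩ := hA.1.1
    obtain ⟨m, hm⟩ := hunit (-g)
    rw [sub_neg_eq_add] at hm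
    refine ⟨-(m : ℤ), ?_⟩
    have := hA.1.2 g _ hm hg
    have he : g - (m • a₀ + g) = (-(m : ℤ)) • a₀ := by
      rw [add_comm, sub_add_cancel_left, neg_zsmul, natCast_zsmul]
    rwa [he] at this
  have h_false : ∃ n : ℤ, f n = false := by
    have hex : ∃ g, A g = false := by
      by_contra h
      push_neg at h
      exact hA.2 (funext fun g => by
        have := h g
        cases hg : A g with
        | false => exact absurd hg this
        | true => rfl)
    obtain ⟨g, hg⟩ := hex
    obtain ⟨m, hm⟩ := hunit g
    refine ⟨(m : ℤ), ?_⟩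
    cases hfm : f (m : ℤ) with
    | false => rfl
    | true =>
      exfalso
      have : A ((m : ℤ) • a₀ - (m • a₀ - g)) = true := hA.1.2 _ _ hm hfm
      rw [natCast_zsmul, sub_sub_cancel] at this
      rw [hg] at this
      exact Bool.false_ne_true this
  obtain ⟨n₀, hn₀⟩ := h_true
  obtain ⟨n₁, hn₁⟩ := h_false
  have hlt : n₀ < n₁ := by
    by_contra h
    push_neg at h
    have := mono n₁ n₀ h hn₀
    rw [hn₁] at this
    exact Bool.false_ne_true this
  have hS : ∃ k : ℕ, f (n₀ + k) = false := by
    refine ⟨(n₁ - n₀).toNat, ?_⟩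
    have : n₀ + ((n₁ - n₀).toNat : ℤ) = n₁ := by omega
    rw [this]; exact hn₁
  classical
  obtain ⟨n, hk1, hn1⟩ : ∃ n : ℤ, f n = true ∧ f (n + 1) = false := by
    let k := Nat.find hS
    have hkspec : f (n₀ + (k : ℤ)) = false := Nat.find_spec hS
    have hk0 : k ≠ 0 := by
      intro h
      have h2 : f (n₀ + ((0:ℕ) : ℤ)) = false := by rw [← h]; exact hkspec
      simp only [Nat.cast_zero, add_zero] at h2
      rw [hn₀] at h2
      exact Bool.noConfusion h2
    refine ⟨n₀ + ((k : ℤ) - 1), ?_, ?_⟩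
    · have hlt' : k - 1 < k := by omega
      have hmin := Nat.find_min hS hlt'
      have hcast : ((k - 1 : ℕ) : ℤ) = (k : ℤ) - 1 := by omega
      rw [hcast] at hmin
      cases hv : f (n₀ + ((k : ℤ) - 1)) with
      | false => exact absurd hv hmin
      | true => rfl
    · have he2 : n₀ + ((k : ℤ) - 1) + 1 = n₀ + (k : ℤ) := by ring
      rw [he2]; exact hkspec
  refine mem_iUnion.2 ⟨n, transl (-(n • a₀)) A, ?_, ?_⟩
  · constructor
    · refine ⟨transl_mem_Yu _ hA, ?_⟩
      show A (0 - -(n • a₀)) = true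
      rw [zero_sub, neg_neg]
      exact hk1
    · intro hmem
      have := (mem_XuAdd_iff.1 hmem).2
      have hval : transl (-(n • a₀)) A a₀ = false := by
        show A (a₀ - -(n • a₀)) = false
        rw [sub_neg_eq_add]
        have he : a₀ + n • a₀ = (n + 1) • a₀ := by
          rw [add_zsmul, one_zsmul, add_comm]
        rw [he]
        exact hn1
      rw [hval] at this
      exact Bool.false_ne_true this
  · rw [transl_transl]
    simp [transl_zero]

end Aux

theorem stmt7 (G : Type) [AddCommGroup G] [Countable G]
    (P : Set G) (hP0 : (0 : G) ∈ P) (hPadd : ∀ a ∈ P, ∀ b ∈ P, a + b ∈ P)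
    (hPgen : ∀ g : G, ∃ a ∈ P, ∃ b ∈ P, g = a - b)
    (a₀ : G) (ha₀ : a₀ ∈ P) (hunit : ∀ s : G, ∃ n : ℕ, n • a₀ - s ∈ P)
    (c : G → ℝ) (hc : ∀ s t : G, c (s + t) = c s + c t) (β : ℝ)
    (μ : Measure (G → Bool)) (hμ0 : μ ≠ 0) (hconc : ConcYu P μ)
    (hRadon : IsRadonYu P μ) (hconf : IsConformal c β μ) :
    (0 < μ (Xu P \ XuAdd P a₀) ∧ μ (Xu P \ XuAdd P a₀) < ⊤) ∧
    (∃! rν : ℝ × Measure (G → Bool),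
      0 < rν.1 ∧ rν.2 ≠ 0 ∧ ConcYu P rν.2 ∧ IsRadonYu P rν.2 ∧
      IsConformal c β rν.2 ∧ rν.2 (Xu P \ XuAdd P a₀) = 1 ∧
      μ = ENNReal.ofReal rν.1 • rν.2) := by
  have hDm : MeasurableSet (Xu P \ XuAdd P a₀) := measurableSet_D P a₀
  have hDsub : Xu P \ XuAdd P a₀ ⊆ Yu P := fun A h => h.1.1
  have hDfin : μ (Xu P \ XuAdd P a₀) < ⊤ :=
    hRadon _ (isClosed_D P a₀).isCompact hDsub
  have hYune : μ (Yu P) ≠ 0 := by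
    intro h
    apply hμ0
    rw [← Measure.measure_univ_eq_zero]
    have h1 : μ univ ≤ μ (Yu P) + μ ((Yu P)ᶜ) := by
      rw [← union_compl_self (Yu P)]
      exact measure_union_le _ _
    rw [h, hconc] at h1
    simp only [add_zero] at h1
    exact le_antisymm h1 (zero_le)
  have hDpos : μ (Xu P \ XuAdd P a₀) ≠ 0 := by
    intro h0
    apply hYune
    have hcov := cover P hP0 hPadd a₀ ha₀ hunit
    have h1 : μ (Yu P) ≤ ∑' n : ℤ, μ (transl (n • a₀) '' (Xu P \ XuAdd P a₀)) :=
      le_trans (measure_mono hcov) (measure_iUnion_le _)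
    have h2 : ∀ n : ℤ, μ (transl (n • a₀) '' (Xu P \ XuAdd P a₀)) = 0 := by
      intro n
      rw [hconf _ _ hDm, h0, mul_zero]
    rw [tsum_congr h2, tsum_zero] at h1
    exact le_antisymm h1 (zero_le)
  refine ⟨⟨pos_iff_ne_zero.mpr hDpos, hDfin⟩, ?_⟩
  set m := μ (Xu P \ XuAdd P a₀) with hm
  have hmne : m ≠ ⊤ := hDfin.ne
  have hinvne : m⁻¹ ≠ ⊤ := by
    rw [ENNReal.inv_ne_top]
    exact hDpos
  refine ⟨(m.toReal, m⁻¹ • μ), ⟨?_, ?_, ?_, ?_, ?_, ?_, ?_⟩, ?_⟩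
  · exact ENNReal.toReal_pos hDpos hmne
  · intro h
    have h' : m⁻¹ • μ = 0 := h
    have h1 : (m⁻¹ • μ) (Xu P \ XuAdd P a₀) = m⁻¹ * m := by
      rw [Measure.smul_apply, smul_eq_mul]
    rw [h'] at h1
    simp only [Measure.coe_zero, Pi.zero_apply] at h1
    have := ENNReal.inv_mul_cancel hDpos hmne
    rw [← h1] at this
    exact one_ne_zero this.symm
  · show (m⁻¹ • μ) ((Yu P)ᶜ) = 0
    rw [Measure.smul_apply, smul_eq_mul, hconc, mul_zero]
  · intro K hK hKY
    rw [Measure.smul_apply, smul_eq_mul]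
    exact ENNReal.mul_lt_top hinvne.lt_top (hRadon K hK hKY)
  · intro s E hE
    rw [Measure.smul_apply, Measure.smul_apply, smul_eq_mul, smul_eq_mul,
      hconf s E hE, mul_left_comm]
  · rw [Measure.smul_apply, smul_eq_mul, ← hm]
    exact ENNReal.inv_mul_cancel hDpos hmne
  · rw [ENNReal.ofReal_toReal hmne, smul_smul, ENNReal.mul_inv_cancel hDpos hmne, one_smul]
  · rintro ⟨r', ν'⟩ ⟨hr', hν'0, hconc', hRad', hconf', hν'D, hμeq⟩
    have hmr : m = ENNReal.ofReal r' := by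
      rw [hm, hμeq, Measure.smul_apply, smul_eq_mul, hν'D, mul_one]
    have hr'eq : r' = m.toReal := by
      rw [hmr, ENNReal.toReal_ofReal hr'.le]
    have hν'eq : ν' = m⁻¹ • μ := by
      rw [hμeq, ← hmr, smul_smul, ENNReal.inv_mul_cancel hDpos hmne, one_smul]
    exact Prod.ext hr'eq hν'eq


end Stmt7
end

section
/- Let β ∈ ℝ and let μ be an e^{-βc}-conformal nonzero Radon measure on Y_u. Then μ is ergodic if and only if every measurable function φ : X_u → ℂ which is square-integrable on X_u \ (X_u + a) for every a ∈ P and which satisfies, for every a ∈ P, φ(A + a) = φ(A) for μ-almost every A ∈ X_u, is μ-almost everywhere equal to a constant. -/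
/-!
STATEMENT 8. Let β ∈ ℝ and μ an e^{-βc}-conformal nonzero Radon measure on Y_u.
Then μ is ergodic iff every measurable φ : X_u → ℂ which is square-integrable on
X_u \ (X_u + a) for every a ∈ P and satisfies φ(A + a) = φ(A) for μ-a.e. A ∈ X_u,
for every a ∈ P, is μ-a.e. constant on X_u.
-/

open MeasureTheory Real Set
open scoped ENNReal NNReal

namespace Stmt8

variable {G : Type}

def transl [AddCommGroup G] (s : G) (A : G → Bool) : G → Bool := fun g => A (g - s)

def Ybar [AddCommGroup G] (P : Set G) : Set (G → Bool) :=
  {A | (∃ g, A g = true) ∧ ∀ g : G, ∀ p ∈ P, A g = true → A (g - p) = true}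

def allG (G : Type) : G → Bool := fun _ => true

def Yu [AddCommGroup G] (P : Set G) : Set (G → Bool) := {A ∈ Ybar P | A ≠ allG G}

def Xu [AddCommGroup G] (P : Set G) : Set (G → Bool) := {A ∈ Yu P | A 0 = true}

def XuAdd [AddCommGroup G] (P : Set G) (a : G) : Set (G → Bool) := transl a '' Xu P

def ConcYu [AddCommGroup G] (P : Set G) (μ : Measure (G → Bool)) : Prop :=
  μ ((Yu P)ᶜ) = 0

def IsRadonYu [AddCommGroup G] (P : Set G) (μ : Measure (G → Bool)) : Prop :=
  ∀ K : Set (G → Bool), IsCompact K → K ⊆ Yu P → μ K < ⊤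

def IsConformal [AddCommGroup G] (c : G → ℝ) (β : ℝ) (μ : Measure (G → Bool)) : Prop :=
  ∀ s : G, ∀ E : Set (G → Bool), MeasurableSet E →
    μ (transl s '' E) = ENNReal.ofReal (Real.exp (-(β * c s))) * μ E

/-- μ is ergodic for the G-action by translations. -/
def IsErgodicG [AddCommGroup G] (μ : Measure (G → Bool)) : Prop :=
  ∀ E : Set (G → Bool), MeasurableSet E → (∀ s : G, transl s '' E = E) →
    μ E = 0 ∨ μ Eᶜ = 0

section Aux

variable [AddCommGroup G]

@[simp] lemma transl_zero (A : G → Bool) : transl (0 : G) A = A := by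
  funext g; simp [transl]

lemma transl_transl (s t : G) (A : G → Bool) :
    transl s (transl t A) = transl (s + t) A := by
  funext g; simp [transl, sub_sub]

lemma transl_leftInv (s : G) (A : G → Bool) : transl (-s) (transl s A) = A := by
  rw [transl_transl]; simp

lemma transl_rightInv (s : G) (A : G → Bool) : transl s (transl (-s) A) = A := by
  rw [transl_transl]; simp

lemma transl_injective (s : G) : Function.Injective (transl (G := G) s) :=
  Function.LeftInverse.injective (g := transl (-s)) (fun A => transl_leftInv s A)

lemma transl_bijective (s : G) : Function.Bijective (transl (G := G) s) :=
  ⟨transl_injective s, fun A => ⟨transl (-s) A, transl_rightInv s A⟩⟩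

lemma transl_image_eq_preimage (s : G) (E : Set (G → Bool)) :
    transl s '' E = transl (-s) ⁻¹' E := by
  ext A
  constructor
  · rintro ⟨B, hB, rfl⟩
    simpa [Set.mem_preimage, transl_leftInv] using hB
  · intro h
    exact ⟨transl (-s) A, h, transl_rightInv s A⟩

lemma mem_Ybar_transl {P : Set G} (s : G) {A : G → Bool} (hA : A ∈ Ybar P) :
    transl s A ∈ Ybar P := by
  obtain ⟨⟨g0, hg0⟩, hher⟩ := hA
  refine ⟨⟨g0 + s, ?_⟩, ?_⟩
  · show A (g0 + s - s) = true
    simpa using hg0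
  · intro g p hp hg
    have h1 : A (g - s - p) = true := hher (g - s) p hp hg
    show A (g - p - s) = true
    rwa [sub_right_comm]

lemma transl_ne_allG {s : G} {A : G → Bool} (h : A ≠ allG G) : transl s A ≠ allG G := by
  intro hc
  apply h
  have := congrArg (transl (-s)) hc
  rwa [transl_leftInv] at this

lemma mem_Yu_transl {P : Set G} (s : G) {A : G → Bool} (hA : A ∈ Yu P) :
    transl s A ∈ Yu P :=
  ⟨mem_Ybar_transl s hA.1, transl_ne_allG hA.2⟩

lemma transl_image_Yu (s : G) (P : Set G) : transl s '' Yu P = Yu P := by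
  apply Subset.antisymm
  · rintro _ ⟨B, hB, rfl⟩; exact mem_Yu_transl s hB
  · intro A hA
    exact ⟨transl (-s) A, mem_Yu_transl (-s) hA, transl_rightInv s A⟩

lemma nsmul_mem_P {P : Set G} (hP0 : (0 : G) ∈ P) (hPadd : ∀ a ∈ P, ∀ b ∈ P, a + b ∈ P)
    {a₀ : G} (ha₀ : a₀ ∈ P) : ∀ n : ℕ, n • a₀ ∈ P := by
  intro n
  induction n with
  | zero => simpa using hP0
  | succ k ih => rw [succ_nsmul]; exact hPadd _ ih _ ha₀

lemma exists_nsmul_transl_mem_Xu {P : Set G} {a₀ : G}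
    (hunit : ∀ s : G, ∃ n : ℕ, n • a₀ - s ∈ P) {A : G → Bool} (hA : A ∈ Yu P) :
    ∃ n : ℕ, transl (n • a₀) A ∈ Xu P := by
  obtain ⟨⟨g0, hg0⟩, hher⟩ := hA.1
  obtain ⟨n, hn⟩ := hunit (-g0)
  refine ⟨n, mem_Yu_transl _ hA, ?_⟩
  have h1 : A (g0 - (n • a₀ - -g0)) = true := hher g0 _ hn hg0
  show A (0 - n • a₀) = true
  have : (0 : G) - n • a₀ = g0 - (n • a₀ - -g0) := by abel
  rwa [this]

lemma measurable_transl (s : G) : Measurable (transl (G := G) s) :=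
  measurable_pi_lambda _ fun g => measurable_pi_apply (g - s)

lemma measurableSet_val (g : G) (b : Bool) : MeasurableSet {A : G → Bool | A g = b} := by
  have heq : {A : G → Bool | A g = b} = (fun A : G → Bool => A g) ⁻¹' {b} := by
    ext A; simp
  rw [heq]
  exact measurable_pi_apply g (measurableSet_singleton b)

variable [Countable G]

lemma measurableSet_Ybar (P : Set G) : MeasurableSet (Ybar P) := by
  have heq : Ybar P = (⋃ g : G, {A : G → Bool | A g = true}) ∩
      (⋂ g : G, ⋂ p : P, ({A : G → Bool | A g = true}ᶜ ∪ {A : G → Bool | A (g - (p : G)) = true})) := by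
    ext A
    simp only [Ybar, mem_setOf_eq, mem_inter_iff, mem_iUnion, mem_iInter, mem_union,
      mem_compl_iff, Subtype.forall]
    constructor
    · rintro ⟨h1, h2⟩
      refine ⟨h1, fun g p hp => ?_⟩
      by_cases h : A g = true
      · exact Or.inr (h2 g p hp h)
      · exact Or.inl h
    · rintro ⟨h1, h2⟩
      refine ⟨h1, fun g p hp h => ?_⟩
      exact (h2 g p hp).resolve_left (by simp [h])
  rw [heq]
  exact (MeasurableSet.iUnion fun g => measurableSet_val g true).inter
    (MeasurableSet.iInter fun g => MeasurableSet.iInter fun p =>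
      ((measurableSet_val g true).compl.union (measurableSet_val _ true)))

lemma measurableSet_allG : MeasurableSet ({allG G} : Set (G → Bool)) := by
  have heq : ({allG G} : Set (G → Bool)) = ⋂ g : G, {A : G → Bool | A g = true} := by
    ext A
    simp [allG, funext_iff]
  rw [heq]
  exact MeasurableSet.iInter fun g => measurableSet_val g true

lemma measurableSet_Yu (P : Set G) : MeasurableSet (Yu P) := by
  have heq : Yu P = Ybar P ∩ ({allG G} : Set (G → Bool))ᶜ := by
    ext A; simp [Yu]
  rw [heq]
  exact (measurableSet_Ybar P).inter measurableSet_allG.compl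

lemma measurableSet_Xu (P : Set G) : MeasurableSet (Xu P) := by
  have heq : Xu P = Yu P ∩ {A : G → Bool | A 0 = true} := by
    ext A; simp [Xu]
  rw [heq]
  exact (measurableSet_Yu P).inter (measurableSet_val 0 true)

lemma measurableSet_transl_image (s : G) {E : Set (G → Bool)} (hE : MeasurableSet E) :
    MeasurableSet (transl s '' E) := by
  rw [transl_image_eq_preimage]
  exact measurable_transl (-s) hE

lemma null_transl_image {c : G → ℝ} {β : ℝ} {μ : Measure (G → Bool)}
    (hconf : IsConformal c β μ) {E : Set (G → Bool)} (hE : μ E = 0) (s : G) :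
    μ (transl s '' E) = 0 := by
  have h1 : μ (transl s '' toMeasurable μ E) = 0 := by
    rw [hconf s _ (measurableSet_toMeasurable μ E), measure_toMeasurable, hE, mul_zero]
  exact measure_mono_null (Set.image_mono (subset_toMeasurable μ E)) h1

end Aux

lemma exists_ae_const {α : Type} [MeasurableSpace α] (ν : Measure α) (hν : ν Set.univ ≠ 0)
    (Φ : α → ℂ)
    (hdich : ∀ (z : ℂ) (r : ℝ), 0 < r →
      ν (Φ ⁻¹' Metric.ball z r) = 0 ∨ ν ((Φ ⁻¹' Metric.ball z r)ᶜ) = 0) :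
    ∃ z : ℂ, ∀ᵐ x ∂ν, Φ x = z := by
  classical
  have hd := TopologicalSpace.denseRange_denseSeq ℂ
  set d := TopologicalSpace.denseSeq ℂ with hdd
  have hpick : ∀ n : ℕ, ∃ k : ℕ, ν (Φ ⁻¹' Metric.ball (d k) ((1/2 : ℝ) ^ n)) ≠ 0 := by
    intro n
    by_contra h
    push_neg at h
    have hcov : (Set.univ : Set α) ⊆ ⋃ k, Φ ⁻¹' Metric.ball (d k) ((1/2 : ℝ) ^ n) := by
      intro x _
      obtain ⟨k, hk⟩ := hd.exists_dist_lt (Φ x) (show (0:ℝ) < (1/2 : ℝ)^n by positivity)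
      exact mem_iUnion.mpr ⟨k, hk⟩
    exact hν (measure_mono_null hcov (measure_iUnion_null h))
  choose k hk using hpick
  set cs : ℕ → ℂ := fun n => d (k n) with hcs
  set S : ℕ → Set α := fun n => Φ ⁻¹' Metric.ball (cs n) ((1/2 : ℝ) ^ n) with hS
  have hSnull : ∀ n, ν (S n)ᶜ = 0 := fun n =>
    (hdich _ _ (by positivity)).resolve_left (hk n)
  have hinter : ∀ n m : ℕ, dist (cs n) (cs m) < (1/2 : ℝ)^n + (1/2 : ℝ)^m := by
    intro n m
    have hne : (S n ∩ S m).Nonempty := by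
      by_contra hemp
      rw [not_nonempty_iff_eq_empty] at hemp
      have hcompl : (S n)ᶜ ∪ (S m)ᶜ = Set.univ := by
        rw [← compl_inter, hemp, compl_empty]
      have := measure_union_null (hSnull n) (hSnull m)
      rw [hcompl] at this
      exact hν this
    obtain ⟨x, hxn, hxm⟩ := hne
    have h1 : dist (Φ x) (cs n) < (1/2 : ℝ)^n := by simpa [hS, Metric.mem_ball] using hxn
    have h2 : dist (Φ x) (cs m) < (1/2 : ℝ)^m := by simpa [hS, Metric.mem_ball] using hxm
    calc dist (cs n) (cs m) ≤ dist (cs n) (Φ x) + dist (Φ x) (cs m) := dist_triangle _ _ _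
      _ < (1/2 : ℝ)^n + (1/2 : ℝ)^m := by rw [dist_comm (cs n) (Φ x)]; exact add_lt_add h1 h2
  have hcauchy : CauchySeq cs := by
    apply cauchySeq_of_le_tendsto_0 (fun N : ℕ => 2 * (1/2 : ℝ)^N)
    · intro n m N hn hm
      have h1 : ((1:ℝ)/2)^n ≤ (1/2 : ℝ)^N :=
        pow_le_pow_of_le_one (by norm_num) (by norm_num) hn
      have h2 : ((1:ℝ)/2)^m ≤ (1/2 : ℝ)^N :=
        pow_le_pow_of_le_one (by norm_num) (by norm_num) hm
      have := hinter n m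
      linarith
    · have h0 : Filter.Tendsto (fun N : ℕ => ((1:ℝ)/2)^N) Filter.atTop (nhds 0) :=
        tendsto_pow_atTop_nhds_zero_of_lt_one (by norm_num) (by norm_num)
      simpa using h0.const_mul 2
  obtain ⟨z, hz⟩ := cauchySeq_tendsto_of_complete hcauchy
  have hdistz : ∀ n, dist (cs n) z ≤ 2 * (1/2 : ℝ)^n := by
    intro n
    refine le_of_tendsto (Filter.Tendsto.dist tendsto_const_nhds hz) ?_
    filter_upwards [Filter.eventually_ge_atTop n] with m hm
    have h1 := hinter n m
    have h2 : ((1:ℝ)/2)^m ≤ (1/2 : ℝ)^n :=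
      pow_le_pow_of_le_one (by norm_num) (by norm_num) hm
    linarith
  have hball : ∀ r : ℝ, 0 < r → ν ((Φ ⁻¹' Metric.ball z r)ᶜ) = 0 := by
    intro r hr
    obtain ⟨n, hn⟩ : ∃ n : ℕ, ((1:ℝ)/2)^n < r / 4 :=
      exists_pow_lt_of_lt_one (by positivity) (by norm_num)
    have hsub : Metric.ball (cs n) ((1/2 : ℝ)^n) ⊆ Metric.ball z r := by
      intro y hy
      rw [Metric.mem_ball] at hy ⊢
      have h1 := hdistz n
      calc dist y z ≤ dist y (cs n) + dist (cs n) z := dist_triangle _ _ _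
        _ < (1/2 : ℝ)^n + 2 * (1/2 : ℝ)^n := by linarith
        _ < r := by linarith
    have hne : ν (Φ ⁻¹' Metric.ball z r) ≠ 0 := fun h0 =>
      hk n (measure_mono_null (Set.preimage_mono hsub) h0)
    exact (hdich z r hr).resolve_left hne
  refine ⟨z, ?_⟩
  rw [MeasureTheory.ae_iff]
  have hsub2 : {x | ¬ Φ x = z} ⊆ ⋃ m : ℕ, (Φ ⁻¹' Metric.ball z (1/((m : ℝ)+1)))ᶜ := by
    intro x hx
    have hpos : 0 < dist (Φ x) z := dist_pos.mpr hx
    obtain ⟨m, hm⟩ := exists_nat_one_div_lt hpos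
    refine mem_iUnion.mpr ⟨m, ?_⟩
    simp only [mem_compl_iff, Set.mem_preimage, Metric.mem_ball, not_lt]
    exact hm.le
  exact measure_mono_null hsub2 (measure_iUnion_null fun m => hball _ (by positivity))


lemma exists_compact_bound [AddCommGroup G] {P : Set G} {a : G} (ha : a ∈ P) :
    ∃ K : Set (G → Bool), IsCompact K ∧ K ⊆ Yu P ∧ Xu P \ XuAdd P a ⊆ K := by
  classical
  set K : Set (G → Bool) :=
    {A | (∀ g : G, ∀ p ∈ P, A g = true → A (g - p) = true) ∧ A 0 = true ∧ A a = false} with hK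
  have hval : ∀ (g : G) (b : Bool), IsClosed {A : G → Bool | A g = b} := fun g b =>
    IsClosed.preimage (continuous_apply g) isClosed_singleton
  have hclosed : IsClosed K := by
    have heq : K = (⋂ g : G, ⋂ p : P,
        ({A : G → Bool | A g = false} ∪ {A : G → Bool | A (g - (p : G)) = true}))
        ∩ ({A : G → Bool | A 0 = true} ∩ {A : G → Bool | A a = false}) := by
      ext A
      simp only [hK, mem_setOf_eq, mem_inter_iff, mem_iInter, mem_union, Subtype.forall]
      constructor
      · rintro ⟨h1, h2, h3⟩
        refine ⟨fun g p hp => ?_, h2, h3⟩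
        by_cases h : A g = true
        · exact Or.inr (h1 g p hp h)
        · exact Or.inl (by simpa using h)
      · rintro ⟨h1, h2, h3⟩
        refine ⟨fun g p hp h => ?_, h2, h3⟩
        rcases h1 g p hp with hf | ht
        · rw [h] at hf; cases hf
        · exact ht
    rw [heq]
    exact ((isClosed_iInter fun g => isClosed_iInter fun p =>
      ((hval g false).union (hval _ true)))).inter ((hval 0 true).inter (hval a false))
  refine ⟨K, hclosed.isCompact, ?_, ?_⟩
  · rintro A ⟨h1, h2, h3⟩
    refine ⟨⟨⟨0, h2⟩, h1⟩, ?_⟩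
    intro hc
    rw [hc] at h3
    simp [allG] at h3
  · rintro A ⟨hX, hnot⟩
    obtain ⟨hAYu, hA0⟩ := hX
    obtain ⟨hAYbar, hAne⟩ := hAYu
    refine ⟨hAYbar.2, hA0, ?_⟩
    by_contra h
    have ha' : A a = true := by simpa using h
    apply hnot
    refine ⟨transl (-a) A, ⟨mem_Yu_transl (-a) ⟨hAYbar, hAne⟩, ?_⟩, transl_rightInv a A⟩
    show A (0 - -a) = true
    simpa using ha'

theorem stmt8 (G : Type) [AddCommGroup G] [Countable G]
    (P : Set G) (hP0 : (0 : G) ∈ P) (hPadd : ∀ a ∈ P, ∀ b ∈ P, a + b ∈ P)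
    (hPgen : ∀ g : G, ∃ a ∈ P, ∃ b ∈ P, g = a - b)
    (a₀ : G) (ha₀ : a₀ ∈ P) (hunit : ∀ s : G, ∃ n : ℕ, n • a₀ - s ∈ P)
    (c : G → ℝ) (hc : ∀ s t : G, c (s + t) = c s + c t) (β : ℝ)
    (μ : Measure (G → Bool)) (hμ0 : μ ≠ 0) (hconc : ConcYu P μ)
    (hRadon : IsRadonYu P μ) (hconf : IsConformal c β μ) :
    IsErgodicG μ ↔
      ∀ φ : (G → Bool) → ℂ, Measurable φ →
        (∀ a ∈ P, ∫⁻ A in Xu P \ XuAdd P a, (‖φ A‖₊ : ℝ≥0∞) ^ 2 ∂μ < ⊤) →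
        (∀ a ∈ P, ∀ᵐ A ∂(μ.restrict (Xu P)), φ (transl a A) = φ A) →
        ∃ z : ℂ, ∀ᵐ A ∂(μ.restrict (Xu P)), φ A = z := by
  constructor
  · -- Ergodic → every invariant function a.e. constant
    intro herg φ hφmeas _hL2 hainv
    classical
    -- the sets where invariance fails
    set Bad : G → Set (G → Bool) := fun a => Xu P ∩ {A | φ (transl a A) = φ A}ᶜ with hBadDef
    have hBadMeas : ∀ a : G, MeasurableSet (Bad a) := fun a =>
      (measurableSet_Xu P).inter
        (measurableSet_eq_fun (hφmeas.comp (measurable_transl a)) hφmeas).compl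
    have hBadNull : ∀ a ∈ P, μ (Bad a) = 0 := by
      intro a ha
      have h := hainv a ha
      rw [MeasureTheory.ae_iff, Measure.restrict_apply' (measurableSet_Xu P)] at h
      refine measure_mono_null ?_ h
      rintro A ⟨hA1, hA2⟩
      exact ⟨hA2, hA1⟩
    set N : Set (G → Bool) := ⋃ s : G, ⋃ a : P, transl s '' Bad a with hNdef
    have hNnull : μ N = 0 :=
      measure_iUnion_null fun s => measure_iUnion_null fun a =>
        null_transl_image hconf (hBadNull a a.2) s
    have hNmeas : MeasurableSet N :=
      MeasurableSet.iUnion fun s => MeasurableSet.iUnion fun a =>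
        measurableSet_transl_image s (hBadMeas a)
    have hNinv : ∀ s : G, transl s '' N = N := by
      intro s
      apply Subset.antisymm
      · rintro _ ⟨B, hB, rfl⟩
        obtain ⟨t, hmem⟩ := mem_iUnion.mp hB
        obtain ⟨a, hmem2⟩ := mem_iUnion.mp hmem
        obtain ⟨C, hC, rfl⟩ := hmem2
        refine mem_iUnion.mpr ⟨s + t, mem_iUnion.mpr ⟨a, ⟨C, hC, ?_⟩⟩⟩
        rw [transl_transl]
      · intro A hA
        obtain ⟨t, hmem⟩ := mem_iUnion.mp hA
        obtain ⟨a, hmem2⟩ := mem_iUnion.mp hmem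
        obtain ⟨C, hC, rfl⟩ := hmem2
        refine ⟨transl (t - s) C,
          mem_iUnion.mpr ⟨t - s, mem_iUnion.mpr ⟨a, ⟨C, hC, rfl⟩⟩⟩, ?_⟩
        rw [transl_transl, add_sub_cancel]
    set Ω : Set (G → Bool) := Yu P \ N with hΩdef
    have hΩmeas : MeasurableSet Ω := (measurableSet_Yu P).diff hNmeas
    have hΩinv : ∀ s : G, transl s '' Ω = Ω := by
      intro s
      rw [hΩdef, Set.image_diff (transl_injective s), transl_image_Yu, hNinv]
    have hΩtransl : ∀ s : G, ∀ A ∈ Ω, transl s A ∈ Ω := by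
      intro s A hA
      rw [← hΩinv s]
      exact mem_image_of_mem _ hA
    have hΩcnull : μ Ωᶜ = 0 := by
      refine measure_mono_null (fun A hA => ?_) (measure_union_null hconc hNnull)
      by_cases hY : A ∈ Yu P
      · right
        by_contra hN
        exact hA ⟨hY, hN⟩
      · left; exact hY
    have hgood : ∀ A ∈ Ω, ∀ a ∈ P, A ∈ Xu P → φ (transl a A) = φ A := by
      intro A hA a ha hAX
      by_contra hne
      apply hA.2
      exact mem_iUnion.mpr ⟨0, mem_iUnion.mpr ⟨⟨a, ha⟩, ⟨A, ⟨hAX, hne⟩, transl_zero A⟩⟩⟩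
    have hcore : ∀ A ∈ Ω, ∀ u v : G, transl u A ∈ Xu P → transl v A ∈ Xu P →
        φ (transl u A) = φ (transl v A) := by
      intro A hA u v hu hv
      obtain ⟨n, hn⟩ := hunit (v - u)
      have hq : n • a₀ ∈ P := nsmul_mem_P hP0 hPadd ha₀ n
      have e1 : φ (transl (n • a₀) (transl u A)) = φ (transl u A) :=
        hgood _ (hΩtransl u A hA) _ hq hu
      have e2 : φ (transl (n • a₀ - (v - u)) (transl v A)) = φ (transl v A) :=
        hgood _ (hΩtransl v A hA) _ hn hv
      have e3 : transl (n • a₀) (transl u A) = transl (n • a₀ - (v - u)) (transl v A) := by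
        rw [transl_transl, transl_transl]
        congr 1
        abel
      rw [e3] at e1
      exact e1.symm.trans e2
    -- domain where some translate lies in Xu
    set D : Set (G → Bool) := {A | ∃ n : ℕ, transl (n • a₀) A ∈ Xu P} with hDdef
    have hDmeas : MeasurableSet D := by
      have heq : D = ⋃ n : ℕ, transl ((n : ℕ) • a₀) ⁻¹' Xu P := by
        ext A
        simp [hDdef]
      rw [heq]
      exact MeasurableSet.iUnion fun n => measurable_transl _ (measurableSet_Xu P)
    have hYuD : Yu P ⊆ D := fun A hA => exists_nsmul_transl_mem_Xu hunit hA
    have hex : ∀ A : G → Bool, ∃ n : ℕ, transl (n • a₀) A ∈ Xu P ∨ A ∉ D := by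
      intro A
      by_cases h : A ∈ D
      · obtain ⟨n, hn⟩ := h
        exact ⟨n, Or.inl hn⟩
      · exact ⟨0, Or.inr h⟩
    set Φ : (G → Bool) → ℂ := fun A => φ (transl ((Nat.find (hex A)) • a₀) A) with hΦdef
    have hΦmeas : Measurable Φ := by
      refine Measurable.find (f := fun (n : ℕ) (A : G → Bool) => φ (transl (n • a₀) A))
        (p := fun (n : ℕ) (A : G → Bool) => transl (n • a₀) A ∈ Xu P ∨ A ∉ D)
        (fun n => hφmeas.comp (measurable_transl _)) (fun n => ?_) hex
      exact ((measurable_transl ((n : ℕ) • a₀) (measurableSet_Xu P)).union hDmeas.compl)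
    have hΦXu : ∀ A ∈ D, transl ((Nat.find (hex A)) • a₀) A ∈ Xu P := by
      intro A hA
      rcases Nat.find_spec (hex A) with h | h
      · exact h
      · exact absurd hA h
    have hΦeq : ∀ A ∈ Ω, A ∈ Xu P → Φ A = φ A := by
      intro A hA hAX
      have hAD : A ∈ D := hYuD hA.1
      have h := hcore A hA ((Nat.find (hex A)) • a₀) 0 (hΦXu A hAD)
        (by rwa [transl_zero])
      rwa [transl_zero] at h
    have hΦinv : ∀ s : G, ∀ A ∈ Ω, Φ (transl s A) = Φ A := by
      intro s A hA
      have hAs : transl s A ∈ Ω := hΩtransl s A hA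
      have hAD : A ∈ D := hYuD hA.1
      have hAsD : transl s A ∈ D := hYuD hAs.1
      have h1 : transl ((Nat.find (hex (transl s A))) • a₀ + s) A ∈ Xu P := by
        rw [← transl_transl]
        exact hΦXu _ hAsD
      have h2 : transl ((Nat.find (hex A)) • a₀) A ∈ Xu P := hΦXu _ hAD
      have h := hcore A hA _ _ h1 h2
      calc Φ (transl s A)
          = φ (transl ((Nat.find (hex (transl s A))) • a₀ + s) A) := by
            simp only [hΦdef]
            rw [transl_transl]
        _ = φ (transl ((Nat.find (hex A)) • a₀) A) := h
        _ = Φ A := rfl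
    set ν := μ.restrict Ω with hνdef
    have hνuniv : ν Set.univ ≠ 0 := by
      rw [hνdef, Measure.restrict_apply_univ]
      intro h0
      apply hμ0
      have h1 : μ Set.univ ≤ μ Ω + μ Ωᶜ := by
        conv_lhs => rw [← Set.union_compl_self Ω]
        exact measure_union_le _ _
      rw [h0, hΩcnull, add_zero] at h1
      exact Measure.measure_univ_eq_zero.mp (le_antisymm h1 zero_le)
    have hdich : ∀ (z : ℂ) (r : ℝ), 0 < r →
        ν (Φ ⁻¹' Metric.ball z r) = 0 ∨ ν ((Φ ⁻¹' Metric.ball z r)ᶜ) = 0 := by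
      intro z r hr
      set E := Ω ∩ Φ ⁻¹' Metric.ball z r with hEdef
      have hEmeas : MeasurableSet E := hΩmeas.inter (hΦmeas measurableSet_ball)
      have hEinv : ∀ s : G, transl s '' E = E := by
        intro s
        apply Subset.antisymm
        · rintro _ ⟨B, ⟨hB1, hB2⟩, rfl⟩
          refine ⟨hΩtransl s B hB1, ?_⟩
          show Φ (transl s B) ∈ Metric.ball z r
          rw [hΦinv s B hB1]
          exact hB2
        · rintro A ⟨hA1, hA2⟩
          refine ⟨transl (-s) A, ⟨hΩtransl (-s) A hA1, ?_⟩, transl_rightInv s A⟩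
          show Φ (transl (-s) A) ∈ Metric.ball z r
          have h := hΦinv s _ (hΩtransl (-s) A hA1)
          rw [transl_rightInv s A] at h
          rw [← h]
          exact hA2
      rcases herg E hEmeas hEinv with h | h
      · left
        rw [hνdef, Measure.restrict_apply (hΦmeas measurableSet_ball)]
        rw [inter_comm]
        exact h
      · right
        rw [hνdef, Measure.restrict_apply (hΦmeas measurableSet_ball).compl]
        refine measure_mono_null ?_ h
        rintro A ⟨hA1, hA2⟩ hc
        exact hA1 hc.2
    obtain ⟨z, hz⟩ := exists_ae_const ν hνuniv Φ hdich
    rw [MeasureTheory.ae_iff, hνdef, Measure.restrict_apply' hΩmeas] at hz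
    refine ⟨z, ?_⟩
    rw [MeasureTheory.ae_iff, Measure.restrict_apply' (measurableSet_Xu P)]
    refine measure_mono_null ?_ (measure_union_null hz hΩcnull)
    rintro A ⟨hA1, hA2⟩
    by_cases hAΩ : A ∈ Ω
    · refine mem_union_left _ ⟨?_, hAΩ⟩
      show ¬ Φ A = z
      rw [hΦeq A hAΩ hA2]
      exact hA1
    · exact mem_union_right _ hAΩ
  · -- Conversely
    intro hfun E hEmeas hEinv
    classical
    set φ : (G → Bool) → ℂ := fun A => if A ∈ E then 1 else 0 with hφdef
    have hφmeas : Measurable φ := Measurable.ite hEmeas measurable_const measurable_const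
    have hmemiff : ∀ a : G, ∀ A, (transl a A ∈ E ↔ A ∈ E) := by
      intro a A
      constructor
      · intro h
        rw [← hEinv a] at h
        obtain ⟨B, hB, hBe⟩ := h
        rwa [← transl_injective a hBe]
      · intro h
        rw [← hEinv a]
        exact mem_image_of_mem _ h
    have hφinv : ∀ a : G, ∀ A, φ (transl a A) = φ A := by
      intro a A
      simp only [hφdef]
      by_cases h : A ∈ E
      · rw [if_pos h, if_pos ((hmemiff a A).mpr h)]
      · rw [if_neg h, if_neg (fun hc => h ((hmemiff a A).mp hc))]
    have hL2 : ∀ a ∈ P, ∫⁻ A in Xu P \ XuAdd P a, (‖φ A‖₊ : ℝ≥0∞) ^ 2 ∂μ < ⊤ := by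
      intro a ha
      obtain ⟨K, hKc, hKYu, hKsub⟩ := exists_compact_bound (P := P) ha
      have hnorm : ∀ A, (‖φ A‖₊ : ℝ≥0∞) ^ 2 ≤ 1 := by
        intro A
        simp only [hφdef]
        by_cases h : A ∈ E <;> simp [h]
      calc ∫⁻ A in Xu P \ XuAdd P a, (‖φ A‖₊ : ℝ≥0∞) ^ 2 ∂μ
          ≤ ∫⁻ _ in Xu P \ XuAdd P a, (1 : ℝ≥0∞) ∂μ := lintegral_mono hnorm
        _ = μ (Xu P \ XuAdd P a) := setLIntegral_one _
        _ ≤ μ K := measure_mono hKsub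
        _ < ⊤ := hRadon K hKc hKYu
    have hainv : ∀ a ∈ P, ∀ᵐ A ∂(μ.restrict (Xu P)), φ (transl a A) = φ A :=
      fun a _ => Filter.Eventually.of_forall (hφinv a)
    obtain ⟨z, hz⟩ := hfun φ hφmeas hL2 hainv
    rw [MeasureTheory.ae_iff, Measure.restrict_apply' (measurableSet_Xu P)] at hz
    have key : ∀ F : Set (G → Bool), (∀ s : G, transl s '' F = F) →
        μ (F ∩ Xu P) = 0 → μ F = 0 := by
      intro F hFinv hF0
      have hs : ∀ s : G, μ (F ∩ transl s '' Xu P) = 0 := by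
        intro s
        have heq : F ∩ transl s '' Xu P = transl s '' (F ∩ Xu P) := by
          rw [Set.image_inter (transl_injective s), hFinv]
        rw [heq]
        exact null_transl_image hconf hF0 s
      have hsub : F ⊆ (⋃ s : G, F ∩ transl s '' Xu P) ∪ (Yu P)ᶜ := by
        intro A hA
        by_cases hY : A ∈ Yu P
        · obtain ⟨n, hn⟩ := exists_nsmul_transl_mem_Xu hunit hY
          refine mem_union_left _ (mem_iUnion.mpr ⟨-((n : ℕ) • a₀), hA,
            ⟨transl ((n : ℕ) • a₀) A, hn, transl_leftInv _ A⟩⟩)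
        · exact mem_union_right _ hY
      exact measure_mono_null hsub
        (measure_union_null (measure_iUnion_null hs) hconc)
    by_cases hz1 : z = 1
    · right
      subst hz1
      have hEcinv : ∀ s : G, transl s '' Eᶜ = Eᶜ := by
        intro s
        rw [Set.image_compl_eq (transl_bijective s), hEinv]
      refine key Eᶜ hEcinv (measure_mono_null ?_ hz)
      rintro A ⟨hA1, hA2⟩
      refine ⟨?_, hA2⟩
      show ¬ φ A = 1
      simp only [hφdef, if_neg hA1]
      exact zero_ne_one
    · left
      refine key E hEinv (measure_mono_null ?_ hz)
      rintro A ⟨hA1, hA2⟩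
      refine ⟨?_, hA2⟩
      show ¬ φ A = z
      simp only [hφdef, if_pos hA1]
      exact fun hc => hz1 hc.symm

end Stmt8
end
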